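/- arXiv:math/0205212 — 5 statements merged into one kernel-verified Lean document; each statement's English description precedes it below -/
import Mathlib

section
/- Let A = (a_1,...,a_{k+1}) and X = (x_1,...,x_{k-1}) be strictly increasing sequences of integers with k ≥ 1. Then there exists an index l ∈ {1,...,k} such that (if l ≤ k-1 then a_l < x_l) and (if l ≥ 2 then x_{l-1} < a_{l+1}). -/
/-- There exists a cutting point of `A = (a 1, …, a (k+1))` and `X = (x 1, …, x (k-1))`:
an index `l ∈ {1,…,k}` with `a l < x l` (when `l ≤ k-1`) and `x (l-1) < a (l+1)` (when `l ≥ 2`). -/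
theorem exists_cutting_point (k : ℕ) (hk : 1 ≤ k) (a x : ℕ → ℤ)
    (ha : ∀ i, 1 ≤ i → i < k + 1 → a i < a (i + 1))
    (hx : ∀ i, 1 ≤ i → i < k - 1 → x i < x (i + 1)) :
    ∃ l, 1 ≤ l ∧ l ≤ k ∧ (l ≤ k - 1 → a l < x l) ∧ (2 ≤ l → x (l - 1) < a (l + 1)) := by
  classical
  have hQ : ∃ l, 1 ≤ l ∧ (l = k ∨ a l < x l) := ⟨k, hk, Or.inl rfl⟩
  obtain ⟨hl1, hlc⟩ := Nat.find_spec hQ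
  set l := Nat.find hQ with hl
  have hlk : l ≤ k := Nat.find_le ⟨hk, Or.inl rfl⟩
  refine ⟨l, hl1, hlk, ?_, ?_⟩
  · intro hle
    rcases hlc with h | h
    · omega
    · exact h
  · intro h2
    have hmin : ¬ (1 ≤ l - 1 ∧ (l - 1 = k ∨ a (l - 1) < x (l - 1))) :=
      Nat.find_min hQ (by omega)
    have h1 : x (l - 1) ≤ a (l - 1) := by
      by_contra hc
      push_neg at hc
      exact hmin ⟨by omega, Or.inr hc⟩
    have h2' : a (l - 1) < a l := by
      have h := ha (l - 1) (by omega) (by omega)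
      have e : l - 1 + 1 = l := by omega
      rwa [e] at h
    have h3 : a l < a (l + 1) := ha l (by omega) (by omega)
    linarith
end

section
/- Let A = (a_1,...,a_{k+1}) and X = (x_1,...,x_{k-1}) be strictly increasing integer sequences with no cutting point in the open interval (l̲, l̄) between two cutting points l̲ < l̄. If there exists j ∈ [l̲+1, l̄-1] with a_j < x_j, then for all l ∈ [l̲+1, l̄-1]: a_l < x_l and a_{l+1} ≤ x_{l-1}. -/
/-- `l` is a cutting point of the sequences `(a 1, …, a (k+1))` and `(x 1, …, x (k-1))`. -/
def IsCutPt (k : ℕ) (a x : ℕ → ℤ) (l : ℕ) : Prop :=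
  1 ≤ l ∧ l ≤ k ∧ (l ≤ k - 1 → a l < x l) ∧ (2 ≤ l → x (l - 1) < a (l + 1))

/-- If there is no cutting point strictly between the cutting points `l₁ < l₂`, and
`a j < x j` for some `j ∈ [l₁+1, l₂-1]`, then for all `l ∈ [l₁+1, l₂-1]` one has
`a l < x l` and `a (l+1) ≤ x (l-1)`. -/
theorem no_cut_between (k : ℕ) (a x : ℕ → ℤ)
    (ha : ∀ i, 1 ≤ i → i < k + 1 → a i < a (i + 1))
    (hx : ∀ i, 1 ≤ i → i < k - 1 → x i < x (i + 1))
    (l₁ l₂ : ℕ) (hll : l₁ < l₂)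
    (hc₁ : IsCutPt k a x l₁) (hc₂ : IsCutPt k a x l₂)
    (hno : ∀ l, l₁ < l → l < l₂ → ¬ IsCutPt k a x l)
    (j : ℕ) (hj₁ : l₁ + 1 ≤ j) (hj₂ : j ≤ l₂ - 1) (hjx : a j < x j) :
    ∀ l, l₁ + 1 ≤ l → l ≤ l₂ - 1 → a l < x l ∧ a (l + 1) ≤ x (l - 1) := by
  obtain ⟨hl₁1, hl₁k, _, _⟩ := hc₁
  obtain ⟨hl₂1, hl₂k, _, _⟩ := hc₂
  have key : ∀ l, l₁ < l → l < l₂ → a l < x l → a (l + 1) ≤ x (l - 1) := by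
    intro l h1 h2 hax
    by_contra h
    push_neg at h
    exact hno l h1 h2 ⟨by omega, by omega, fun _ => hax, fun _ => h⟩
  have hstep : ∀ l, l₁ < l → l + 1 < l₂ → a l < x l → a (l + 1) < x (l + 1) := by
    intro l h1 h2 hax
    have h3 := key l h1 (by omega) hax
    have h4 : x (l - 1) < x l := by
      have h := hx (l - 1) (by omega) (by omega)
      rwa [show l - 1 + 1 = l by omega] at h
    have h5 : x l < x (l + 1) := hx l (by omega) (by omega)
    linarith
  have bstep : ∀ l, l₁ + 1 < l → l < l₂ → a l < x l → a (l - 1) < x (l - 1) := by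
    intro l h1 h2 hax
    have h3 := key l (by omega) h2 hax
    have h5 : a (l - 1) < a l := by
      have h := ha (l - 1) (by omega) (by omega)
      rwa [show l - 1 + 1 = l by omega] at h
    have h6 : a l < a (l + 1) := ha l (by omega) (by omega)
    linarith
  have fwd : ∀ n, j + n < l₂ → a (j + n) < x (j + n) := by
    intro n
    induction n with
    | zero => intro _; simpa using hjx
    | succ m ih =>
      intro h
      have h1 := ih (by omega)
      have h2 := hstep (j + m) (by omega) (by omega) h1
      rwa [show j + m + 1 = j + (m + 1) by omega] at h2
  have bwd : ∀ n, l₁ < j - n → a (j - n) < x (j - n) := by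
    intro n
    induction n with
    | zero => intro _; simpa using hjx
    | succ m ih =>
      intro h
      have h1 := ih (by omega)
      have h2 := bstep (j - m) (by omega) (by omega) h1
      rwa [show j - m - 1 = j - (m + 1) by omega] at h2
  intro l hl1 hl2
  have hax : a l < x l := by
    rcases le_or_gt j l with h | h
    · have := fwd (l - j) (by omega)
      rwa [show j + (l - j) = l by omega] at this
    · have := bwd (j - l) (by omega)
      rwa [show j - (j - l) = l by omega] at this
  exact ⟨hax, key l (by omega) (by omega) hax⟩
end

section
/- Let L be a ladder region. For every pair of two-rowed arrays (T₁, T₂) ∈ T^L_{k+1} × T^L_{k-1} (bounded by fixed A and E) there exists an allowed cutting point (l, m): a pair where l is a cutting point of the top rows of T₁ and T₂, m is a cutting point of the bottom rows, and both two-rowed arrays obtained by cutting the top rows at l and the bottom rows at m lie in L. -/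
/-- `L ⊆ ℤ²` is a ladder region. -/
def IsLadderRegion (L : Set (ℤ × ℤ)) : Prop :=
  ∀ i j i' j', (i, j) ∈ L → (i', j') ∈ L → i ≤ i' → j' ≤ j →
    ∀ r s, i ≤ r → r ≤ i' → j' ≤ s → s ≤ j → (r, s) ∈ L

/-- The set `T^L_k(A → E)` of two-rowed arrays of length `k` (with entries indexed
`1, …, k` and normalized to `0` elsewhere) bounded by `A` and `E` and in `L`. -/
def TR (L : Set (ℤ × ℤ)) (A E : ℤ × ℤ) (k : ℕ) : Set ((ℕ → ℤ) × (ℕ → ℤ)) :=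
  {T | (∀ i, 1 ≤ i → i < k → T.1 i < T.1 (i + 1)) ∧
       (∀ i, 1 ≤ i → i < k → T.2 i < T.2 (i + 1)) ∧
       (∀ i, 1 ≤ i → i ≤ k →
          A.1 ≤ T.1 i ∧ T.1 i ≤ E.1 - 1 ∧ A.2 + 1 ≤ T.2 i ∧ T.2 i ≤ E.2 ∧
          (T.1 i, T.2 i) ∈ L) ∧
       (∀ i, i = 0 ∨ k < i → T.1 i = 0 ∧ T.2 i = 0)}

/-- Cutting the pair `(T₁, T₂)` (of lengths `k+1` and `k-1`) at the pair `(l, m)`: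
the top rows are cut at `l` and the bottom rows at `m`, producing two arrays of length `k`. -/
def cutPair (k : ℕ) (T : ((ℕ → ℤ) × (ℕ → ℤ)) × ((ℕ → ℤ) × (ℕ → ℤ))) (l m : ℕ) :
    ((ℕ → ℤ) × (ℕ → ℤ)) × ((ℕ → ℤ) × (ℕ → ℤ)) :=
  ((fun i => if i = 0 ∨ k < i then 0 else if i ≤ l then T.1.1 i else T.2.1 (i - 1),
    fun i => if i = 0 ∨ k < i then 0 else if i ≤ m then T.1.2 i else T.2.2 (i - 1)),
   (fun i => if i = 0 ∨ k < i then 0 else if i ≤ l - 1 then T.2.1 i else T.1.1 (i + 1),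
    fun i => if i = 0 ∨ k < i then 0 else if i ≤ m - 1 then T.2.2 i else T.1.2 (i + 1)))

/-- `(l, m)` is an allowed cutting point of `(T₁, T₂) ∈ T^L_{k+1} × T^L_{k-1}`:
`l` is a top cutting point, `m` is a bottom cutting point, and both arrays obtained
by cutting are in `T^L_k` (in particular, in the ladder region `L`). -/
def AllowedCut (L : Set (ℤ × ℤ)) (A E : ℤ × ℤ) (k : ℕ)
    (T : ((ℕ → ℤ) × (ℕ → ℤ)) × ((ℕ → ℤ) × (ℕ → ℤ))) (p : ℕ × ℕ) : Prop :=
  IsCutPt k T.1.1 T.2.1 p.1 ∧ IsCutPt k T.1.2 T.2.2 p.2 ∧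
  (cutPair k T p.1 p.2).1 ∈ TR L A E k ∧ (cutPair k T p.1 p.2).2 ∈ TR L A E k

private lemma findGreatest_zero_or_spec (P : ℕ → Prop) [DecidablePred P] (b : ℕ) :
    Nat.findGreatest P b = 0 ∨ P (Nat.findGreatest P b) := by
  induction b with
  | zero => exact Or.inl rfl
  | succ n ih =>
    rw [Nat.findGreatest_succ]
    split
    · right; assumption
    · exact ih

/-- For a ladder region `L`, every pair of two-rowed arrays in
`T^L_{k+1} × T^L_{k-1}` has an allowed cutting point. -/
theorem exists_allowedCut (L : Set (ℤ × ℤ)) (hL : IsLadderRegion L) (A E : ℤ × ℤ)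
    (k : ℕ) (hk : 1 ≤ k)
    (T : ((ℕ → ℤ) × (ℕ → ℤ)) × ((ℕ → ℤ) × (ℕ → ℤ)))
    (hT : T ∈ (TR L A E (k + 1)) ×ˢ (TR L A E (k - 1))) :
    ∃ p : ℕ × ℕ, AllowedCut L A E k T p := by
  classical
  obtain ⟨⟨a, b⟩, x, y⟩ := T
  obtain ⟨hT1, hT2⟩ := hT
  simp only [TR, Set.mem_setOf_eq] at hT1 hT2
  obtain ⟨ha, hb, hab, -⟩ := hT1
  obtain ⟨hx, hy, hxy, -⟩ := hT2
  -- j2 : the first index where both the top and bottom comparisons are "crossed forward"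
  have hex2 : ∃ j, (1 ≤ j ∧ j + 1 ≤ k ∧ a (j+1) < x j ∧ b (j+1) < y j) ∨ j = k :=
    ⟨k, Or.inr rfl⟩
  set j2 := Nat.find hex2 with hj2_def
  have hj2le : j2 ≤ k := Nat.find_le (Or.inr rfl)
  have hj2spec : (1 ≤ j2 ∧ j2 + 1 ≤ k ∧ a (j2+1) < x j2 ∧ b (j2+1) < y j2) ∨ j2 = k :=
    Nat.find_spec hex2
  have hj2min : ∀ j, j < j2 →
      ¬((1 ≤ j ∧ j + 1 ≤ k ∧ a (j+1) < x j ∧ b (j+1) < y j) ∨ j = k) :=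
    fun j hj => Nat.find_min hex2 hj
  -- j1 : the last index before j2 where both comparisons are "crossed backward"
  set j1 := Nat.findGreatest (fun j => 1 ≤ j ∧ j < j2 ∧ x j < a (j+1) ∧ y j < b (j+1)) k
    with hj1_def
  have hj1le : j1 ≤ k := Nat.findGreatest_le k
  have hj1spec : j1 = 0 ∨ (1 ≤ j1 ∧ j1 < j2 ∧ x j1 < a (j1+1) ∧ y j1 < b (j1+1)) :=
    findGreatest_zero_or_spec _ k
  have hj1max : ∀ j, j1 < j → j ≤ k → ¬(1 ≤ j ∧ j < j2 ∧ x j < a (j+1) ∧ y j < b (j+1)) :=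
    fun j h1 h2 => Nat.findGreatest_is_greatest h1 h2
  have hj1j2 : j1 < j2 := by
    rcases hj1spec with h0 | hY
    · rcases hj2spec with hX | hX <;> omega
    · exact hY.2.1
  -- the cutting points
  have hex_l : ∃ j, (j1 < j ∧ j + 1 ≤ k ∧ a (j+1) < x j) ∨ j = k := ⟨k, Or.inr rfl⟩
  set l := Nat.find hex_l with hl_def
  have hl_le_k : l ≤ k := Nat.find_le (Or.inr rfl)
  have hl_spec : (j1 < l ∧ l + 1 ≤ k ∧ a (l+1) < x l) ∨ l = k := Nat.find_spec hex_l
  have hl_min : ∀ j, j < l → ¬((j1 < j ∧ j + 1 ≤ k ∧ a (j+1) < x j) ∨ j = k) :=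
    fun j hj => Nat.find_min hex_l hj
  have hex_m : ∃ j, (j1 < j ∧ j + 1 ≤ k ∧ b (j+1) < y j) ∨ j = k := ⟨k, Or.inr rfl⟩
  set m := Nat.find hex_m with hm_def
  have hm_le_k : m ≤ k := Nat.find_le (Or.inr rfl)
  have hm_spec : (j1 < m ∧ m + 1 ≤ k ∧ b (m+1) < y m) ∨ m = k := Nat.find_spec hex_m
  have hm_min : ∀ j, j < m → ¬((j1 < j ∧ j + 1 ≤ k ∧ b (j+1) < y j) ∨ j = k) :=
    fun j hj => Nat.find_min hex_m hj
  have hj1_lt_l : j1 < l := by rcases hl_spec with h | h <;> omega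
  have hj1_lt_m : j1 < m := by rcases hm_spec with h | h <;> omega
  have h1l : 1 ≤ l := by omega
  have h1m : 1 ≤ m := by omega
  have hl_le_j2 : l ≤ j2 := by
    rcases hj2spec with hX | hX
    · exact Nat.find_le (Or.inl ⟨hj1j2, hX.2.1, hX.2.2.1⟩)
    · omega
  have hm_le_j2 : m ≤ j2 := by
    rcases hj2spec with hX | hX
    · exact Nat.find_le (Or.inl ⟨hj1j2, hX.2.1, hX.2.2.2⟩)
    · omega
  -- basic cutting-point facts
  have hPl : l + 1 ≤ k → a l < x l := by
    intro h
    rcases hl_spec with ⟨-, h2, h3⟩ | h2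
    · have := ha l h1l (by omega)
      omega
    · omega
  have hPm : m + 1 ≤ k → b m < y m := by
    intro h
    rcases hm_spec with ⟨-, h2, h3⟩ | h2
    · have := hb m h1m (by omega)
      omega
    · omega
  have hQl : 2 ≤ l → x (l - 1) < a (l + 1) := by
    intro h2
    have hstep : a l < a (l + 1) := ha l h1l (by omega)
    rcases Nat.lt_or_ge j1 (l - 1) with hcase | hcase
    · have hmin := hl_min (l - 1) (by omega)
      have e : l - 1 + 1 = l := by omega
      rw [e] at hmin
      have hne : ¬(j1 < l - 1 ∧ l ≤ k ∧ a l < x (l - 1)) := fun hh => hmin (Or.inl hh)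
      omega
    · have hj1eq : j1 = l - 1 := by omega
      rcases hj1spec with h0 | hY
      · omega
      · obtain ⟨-, -, hxa, -⟩ := hY
        have hstep2 : a (j1 + 1) < a (j1 + 1 + 1) := ha (j1 + 1) (by omega) (by omega)
        have e1 : l - 1 = j1 := by omega
        have e2 : l + 1 = j1 + 1 + 1 := by omega
        rw [e1, e2]
        omega
  have hQm : 2 ≤ m → y (m - 1) < b (m + 1) := by
    intro h2
    have hstep : b m < b (m + 1) := hb m h1m (by omega)
    rcases Nat.lt_or_ge j1 (m - 1) with hcase | hcase
    · have hmin := hm_min (m - 1) (by omega)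
      have e : m - 1 + 1 = m := by omega
      rw [e] at hmin
      have hne : ¬(j1 < m - 1 ∧ m ≤ k ∧ b m < y (m - 1)) := fun hh => hmin (Or.inl hh)
      omega
    · have hj1eq : j1 = m - 1 := by omega
      rcases hj1spec with h0 | hY
      · omega
      · obtain ⟨-, -, -, hyb⟩ := hY
        have hstep2 : b (j1 + 1) < b (j1 + 1 + 1) := hb (j1 + 1) (by omega) (by omega)
        have e1 : m - 1 = j1 := by omega
        have e2 : m + 1 = j1 + 1 + 1 := by omega
        rw [e1, e2]
        omega
  -- the compatibility condition in the gap
  have hC : ∀ j, j1 < j → j < j2 →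
      ((x j ≤ a (j+1) ∧ b (j+1) ≤ y j) ∨ (a (j+1) ≤ x j ∧ y j ≤ b (j+1))) := by
    intro j h1 h2
    have hXn := hj2min j h2
    have hYn := hj1max j h1 (by omega)
    omega
  -- mixed points are in L
  have hmixL : ∀ j, j1 < j → j < j2 → ((a (j+1), y j) ∈ L ∧ (x j, b (j+1)) ∈ L) := by
    intro j h1 h2
    have hxyL : (x j, y j) ∈ L := (hxy j (by omega) (by omega)).2.2.2.2
    have habL : (a (j+1), b (j+1)) ∈ L := (hab (j+1) (by omega) (by omega)).2.2.2.2
    rcases hC j h1 h2 with ⟨h3, h4⟩ | ⟨h3, h4⟩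
    · exact ⟨hL (x j) (y j) (a (j+1)) (b (j+1)) hxyL habL h3 h4 (a (j+1)) (y j) h3 le_rfl
          h4 le_rfl,
        hL (x j) (y j) (a (j+1)) (b (j+1)) hxyL habL h3 h4 (x j) (b (j+1)) le_rfl h3
          le_rfl h4⟩
    · exact ⟨hL (a (j+1)) (b (j+1)) (x j) (y j) habL hxyL h3 h4 (a (j+1)) (y j) le_rfl h3
          le_rfl h4,
        hL (a (j+1)) (b (j+1)) (x j) (y j) habL hxyL h3 h4 (x j) (b (j+1)) h3 le_rfl
          h4 le_rfl⟩
  refine ⟨(l, m), ?_⟩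
  simp only [AllowedCut, IsCutPt, cutPair, TR, Set.mem_setOf_eq]
  refine ⟨⟨h1l, hl_le_k, fun h => hPl (by omega), hQl⟩,
    ⟨h1m, hm_le_k, fun h => hPm (by omega), hQm⟩, ⟨?_, ?_, ?_, ?_⟩, ⟨?_, ?_, ?_, ?_⟩⟩
  -- first cut array, top row increasing
  · intro i h1 h2
    have hni : ¬(i = 0 ∨ k < i) := by omega
    have hni' : ¬(i + 1 = 0 ∨ k < i + 1) := by omega
    simp only [if_neg hni, if_neg hni']
    rcases le_or_gt (i + 1) l with hc | hc
    · simp only [if_pos hc, if_pos (show i ≤ l by omega)]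
      exact ha i h1 (by omega)
    · rcases le_or_gt i l with hd | hd
      · simp only [if_pos hd, if_neg (show ¬ i + 1 ≤ l by omega), Nat.add_sub_cancel]
        have hieq : i = l := by omega
        subst hieq
        exact hPl (by omega)
      · simp only [if_neg (show ¬ i ≤ l by omega), if_neg (show ¬ i + 1 ≤ l by omega),
          Nat.add_sub_cancel]
        have h := hx (i - 1) (by omega) (by omega)
        have e : i - 1 + 1 = i := by omega
        rwa [e] at h
  -- first cut array, bottom row increasing
  · intro i h1 h2
    have hni : ¬(i = 0 ∨ k < i) := by omega
    have hni' : ¬(i + 1 = 0 ∨ k < i + 1) := by omega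
    simp only [if_neg hni, if_neg hni']
    rcases le_or_gt (i + 1) m with hc | hc
    · simp only [if_pos hc, if_pos (show i ≤ m by omega)]
      exact hb i h1 (by omega)
    · rcases le_or_gt i m with hd | hd
      · simp only [if_pos hd, if_neg (show ¬ i + 1 ≤ m by omega), Nat.add_sub_cancel]
        have hieq : i = m := by omega
        subst hieq
        exact hPm (by omega)
      · simp only [if_neg (show ¬ i ≤ m by omega), if_neg (show ¬ i + 1 ≤ m by omega),
          Nat.add_sub_cancel]
        have h := hy (i - 1) (by omega) (by omega)
        have e : i - 1 + 1 = i := by omega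
        rwa [e] at h
  -- first cut array, bounds and membership in L
  · intro i h1 h2
    have hni : ¬(i = 0 ∨ k < i) := by omega
    simp only [if_neg hni]
    rcases le_or_gt i l with hil | hil <;> rcases le_or_gt i m with him | him
    · simp only [if_pos hil, if_pos him]
      have h := hab i h1 (by omega)
      exact h
    · simp only [if_pos hil, if_neg (show ¬ i ≤ m by omega)]
      have ht := hab i h1 (by omega)
      have hbo := hxy (i - 1) (by omega) (by omega)
      have hm' := (hmixL (i - 1) (by omega) (by omega)).1
      have e : i - 1 + 1 = i := by omega
      rw [e] at hm'
      exact ⟨ht.1, ht.2.1, hbo.2.2.1, hbo.2.2.2.1, hm'⟩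
    · simp only [if_neg (show ¬ i ≤ l by omega), if_pos him]
      have ht := hxy (i - 1) (by omega) (by omega)
      have hbo := hab i h1 (by omega)
      have hm' := (hmixL (i - 1) (by omega) (by omega)).2
      have e : i - 1 + 1 = i := by omega
      rw [e] at hm'
      exact ⟨ht.1, ht.2.1, hbo.2.2.1, hbo.2.2.2.1, hm'⟩
    · simp only [if_neg (show ¬ i ≤ l by omega), if_neg (show ¬ i ≤ m by omega)]
      exact hxy (i - 1) (by omega) (by omega)
  -- first cut array, zero outside
  · intro i hi
    exact ⟨if_pos hi, if_pos hi⟩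
  -- second cut array, top row increasing
  · intro i h1 h2
    have hni : ¬(i = 0 ∨ k < i) := by omega
    have hni' : ¬(i + 1 = 0 ∨ k < i + 1) := by omega
    simp only [if_neg hni, if_neg hni']
    rcases le_or_gt (i + 1) (l - 1) with hc | hc
    · simp only [if_pos hc, if_pos (show i ≤ l - 1 by omega)]
      exact hx i h1 (by omega)
    · rcases le_or_gt i (l - 1) with hd | hd
      · simp only [if_pos hd, if_neg (show ¬ i + 1 ≤ l - 1 by omega)]
        have hq := hQl (by omega)
        have e1 : l - 1 = i := by omega
        have e2 : l + 1 = i + 1 + 1 := by omega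
        rw [e1, e2] at hq
        exact hq
      · simp only [if_neg (show ¬ i ≤ l - 1 by omega),
          if_neg (show ¬ i + 1 ≤ l - 1 by omega)]
        exact ha (i + 1) (by omega) (by omega)
  -- second cut array, bottom row increasing
  · intro i h1 h2
    have hni : ¬(i = 0 ∨ k < i) := by omega
    have hni' : ¬(i + 1 = 0 ∨ k < i + 1) := by omega
    simp only [if_neg hni, if_neg hni']
    rcases le_or_gt (i + 1) (m - 1) with hc | hc
    · simp only [if_pos hc, if_pos (show i ≤ m - 1 by omega)]
      exact hy i h1 (by omega)
    · rcases le_or_gt i (m - 1) with hd | hd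
      · simp only [if_pos hd, if_neg (show ¬ i + 1 ≤ m - 1 by omega)]
        have hq := hQm (by omega)
        have e1 : m - 1 = i := by omega
        have e2 : m + 1 = i + 1 + 1 := by omega
        rw [e1, e2] at hq
        exact hq
      · simp only [if_neg (show ¬ i ≤ m - 1 by omega),
          if_neg (show ¬ i + 1 ≤ m - 1 by omega)]
        exact hb (i + 1) (by omega) (by omega)
  -- second cut array, bounds and membership in L
  · intro i h1 h2
    have hni : ¬(i = 0 ∨ k < i) := by omega
    simp only [if_neg hni]
    rcases le_or_gt i (l - 1) with hil | hil <;> rcases le_or_gt i (m - 1) with him | him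
    · simp only [if_pos hil, if_pos him]
      exact hxy i h1 (by omega)
    · simp only [if_pos hil, if_neg (show ¬ i ≤ m - 1 by omega)]
      have ht := hxy i h1 (by omega)
      have hbo := hab (i + 1) (by omega) (by omega)
      have hm' := (hmixL i (by omega) (by omega)).2
      exact ⟨ht.1, ht.2.1, hbo.2.2.1, hbo.2.2.2.1, hm'⟩
    · simp only [if_neg (show ¬ i ≤ l - 1 by omega), if_pos him]
      have ht := hab (i + 1) (by omega) (by omega)
      have hbo := hxy i h1 (by omega)
      have hm' := (hmixL i (by omega) (by omega)).1
      exact ⟨ht.1, ht.2.1, hbo.2.2.1, hbo.2.2.2.1, hm'⟩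
    · simp only [if_neg (show ¬ i ≤ l - 1 by omega), if_neg (show ¬ i ≤ m - 1 by omega)]
      exact hab (i + 1) (by omega) (by omega)
  -- second cut array, zero outside
  · intro i hi
    exact ⟨if_pos hi, if_pos hi⟩
end

section
/- The map I sending a pair (T₁, T₂) ∈ T^L_{k+1} × T^L_{k-1} to the pair obtained by cutting at its optimal cutting point is a well-defined injection from T^L_{k+1} × T^L_{k-1} into T^L_k × T^L_k. -/
/-- `p` is the optimal cutting point of `T`: it is allowed, `|l - m|` is minimal among
allowed cutting points, and ties are broken by lexicographic order on `(l, m)`. -/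
def OptimalCut (L : Set (ℤ × ℤ)) (A E : ℤ × ℤ) (k : ℕ)
    (T : ((ℕ → ℤ) × (ℕ → ℤ)) × ((ℕ → ℤ) × (ℕ → ℤ))) (p : ℕ × ℕ) : Prop :=
  AllowedCut L A E k T p ∧
  ∀ q : ℕ × ℕ, AllowedCut L A E k T q →
    ((p.1 : ℤ) - p.2).natAbs < ((q.1 : ℤ) - q.2).natAbs ∨
    (((p.1 : ℤ) - p.2).natAbs = ((q.1 : ℤ) - q.2).natAbs ∧
      (p.1 < q.1 ∨ (p.1 = q.1 ∧ p.2 ≤ q.2)))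

section Helpers

variable {L : Set (ℤ × ℤ)} {A E : ℤ × ℤ} {k : ℕ}
variable {T : ((ℕ → ℤ) × (ℕ → ℤ)) × ((ℕ → ℤ) × (ℕ → ℤ))} {l m : ℕ}

-- evaluation lemmas for cutPair
lemma cp11a {i : ℕ} (h1 : 1 ≤ i) (h2 : i ≤ k) (h3 : i ≤ l) :
    (cutPair k T l m).1.1 i = T.1.1 i := by
  simp only [cutPair]; rw [if_neg (by omega), if_pos h3]

lemma cp11b {i : ℕ} (h1 : l < i) (h2 : i ≤ k) :
    (cutPair k T l m).1.1 i = T.2.1 (i - 1) := by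
  simp only [cutPair]; rw [if_neg (by omega), if_neg (by omega)]

lemma cp12a {i : ℕ} (h1 : 1 ≤ i) (h2 : i ≤ k) (h3 : i ≤ m) :
    (cutPair k T l m).1.2 i = T.1.2 i := by
  simp only [cutPair]; rw [if_neg (by omega), if_pos h3]

lemma cp12b {i : ℕ} (h1 : m < i) (h2 : i ≤ k) :
    (cutPair k T l m).1.2 i = T.2.2 (i - 1) := by
  simp only [cutPair]; rw [if_neg (by omega), if_neg (by omega)]

lemma cp21a {i : ℕ} (h1 : 1 ≤ i) (h2 : i ≤ k) (h3 : i ≤ l - 1) :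
    (cutPair k T l m).2.1 i = T.2.1 i := by
  simp only [cutPair]; rw [if_neg (by omega), if_pos h3]

lemma cp21b {i : ℕ} (h1 : 1 ≤ i) (h2 : i ≤ k) (h3 : l ≤ i) :
    (cutPair k T l m).2.1 i = T.1.1 (i + 1) := by
  simp only [cutPair]; rw [if_neg (by omega), if_neg (by omega)]

lemma cp22a {i : ℕ} (h1 : 1 ≤ i) (h2 : i ≤ k) (h3 : i ≤ m - 1) :
    (cutPair k T l m).2.2 i = T.2.2 i := by
  simp only [cutPair]; rw [if_neg (by omega), if_pos h3]

lemma cp22b {i : ℕ} (h1 : 1 ≤ i) (h2 : i ≤ k) (h3 : m ≤ i) :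
    (cutPair k T l m).2.2 i = T.1.2 (i + 1) := by
  simp only [cutPair]; rw [if_neg (by omega), if_neg (by omega)]

-- corner lemma
lemma corner (hL : IsLadderRegion L) {p q : ℤ × ℤ} (hp : p ∈ L) (hq : q ∈ L)
    (h1 : ¬(p.1 < q.1 ∧ p.2 < q.2)) (h2 : ¬(q.1 < p.1 ∧ q.2 < p.2)) :
    (p.1, q.2) ∈ L ∧ (q.1, p.2) ∈ L := by
  have hp' : (p.1, p.2) ∈ L := by simpa using hp
  have hq' : (q.1, q.2) ∈ L := by simpa using hq
  rcases lt_trichotomy p.1 q.1 with h | h | h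
  · have hy : q.2 ≤ p.2 := by by_contra hc; exact h1 ⟨h, by omega⟩
    exact ⟨hL p.1 p.2 q.1 q.2 hp' hq' h.le hy p.1 q.2 le_rfl h.le le_rfl hy,
           hL p.1 p.2 q.1 q.2 hp' hq' h.le hy q.1 p.2 h.le le_rfl hy le_rfl⟩
  · exact ⟨by rw [h]; exact hq', by rw [← h]; exact hp'⟩
  · have hy : p.2 ≤ q.2 := by by_contra hc; exact h2 ⟨h, by omega⟩
    exact ⟨hL q.1 q.2 p.1 p.2 hq' hp' h.le hy p.1 q.2 h.le le_rfl hy le_rfl,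
           hL q.1 q.2 p.1 p.2 hq' hp' h.le hy q.1 p.2 le_rfl h.le le_rfl hy⟩
-- localized existence of a cutting point
lemma exists_cut_in (a x : ℕ → ℤ) (u v : ℕ) (hu : 1 ≤ u) (huv : u ≤ v) (hv : v ≤ k)
    (ha : ∀ i, 1 ≤ i → i < k + 1 → a i < a (i + 1))
    (h2 : 2 ≤ u → x (u - 1) < a (u + 1))
    (h1 : v ≤ k - 1 → a v < x v) :
    ∃ l, u ≤ l ∧ l ≤ v ∧ IsCutPt k a x l := by
  classical
  have hP : ∃ j, u ≤ j ∧ (j ≤ k - 1 → a j < x j) := ⟨v, huv, h1⟩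
  set P : ℕ → Prop := fun j => u ≤ j ∧ (j ≤ k - 1 → a j < x j) with hPdef
  have hex : ∃ j, P j := hP
  let l := Nat.find hex
  have hPl : P l := Nat.find_spec hex
  have hlv : l ≤ v := Nat.find_min' hex ⟨huv, h1⟩
  have hul : u ≤ l := hPl.1
  have hc1 : l ≤ k - 1 → a l < x l := hPl.2
  refine ⟨l, hul, hlv, by omega, by omega, hc1, ?_⟩
  intro hl2
  rcases eq_or_lt_of_le hul with heq | hlt
  · exact heq ▸ h2 (heq ▸ hl2)
  · have hnP : ¬ P (l - 1) := Nat.find_min hex (by omega)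
    have h3 : ¬ ((l - 1) ≤ k - 1 → a (l - 1) < x (l - 1)) := by
      intro hc; exact hnP ⟨by omega, hc⟩
    push_neg at h3
    obtain ⟨hle, hxa⟩ := h3
    have e1 : a (l - 1) < a l := by
      have := ha (l - 1) (by omega) (by omega)
      have : a (l-1) < a (l-1+1) := this
      simpa [Nat.sub_add_cancel (by omega : 1 ≤ l)] using this
    have e2 : a l < a (l + 1) := ha l (by omega) (by omega)
    omega

end Helpers

section Exist

variable {L : Set (ℤ × ℤ)} {A E : ℤ × ℤ} {k : ℕ}
variable {T : ((ℕ → ℤ) × (ℕ → ℤ)) × ((ℕ → ℤ) × (ℕ → ℤ))}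

lemma exists_allowed (hL : IsLadderRegion L) (hk : 1 ≤ k)
    (hT1 : T.1 ∈ TR L A E (k + 1)) (hT2 : T.2 ∈ TR L A E (k - 1)) :
    ∃ p, AllowedCut L A E k T p := by
  classical
  obtain ⟨ainc, binc, abL, -⟩ := hT1
  obtain ⟨xinc, yinc, xyL, -⟩ := hT2
  set a := T.1.1 with ha; set b := T.1.2 with hb
  set x := T.2.1 with hx; set y := T.2.2 with hy
  set SW : ℕ → Prop := fun j => x (j - 1) < a j ∧ y (j - 1) < b j with hSW
  set NE : ℕ → Prop := fun j => a j < x (j - 1) ∧ b j < y (j - 1) with hNE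
  -- u : greatest j ≤ k with j = 1 or SW j
  set u := Nat.findGreatest (fun j => j = 1 ∨ SW j) k with hudef
  have hu1 : 1 ≤ u := Nat.le_findGreatest hk (Or.inl rfl)
  have huk : u ≤ k := Nat.findGreatest_le k
  have huSW : u = 1 ∨ SW u := by
    rw [hudef]; exact Nat.findGreatest_spec (P := fun j => j = 1 ∨ SW j) hk (Or.inl rfl)
  -- v : least w ≥ u with w = k or NE (w+1)
  have hex : ∃ w, u ≤ w ∧ (w = k ∨ NE (w + 1)) := ⟨k, huk, Or.inl rfl⟩
  set v := Nat.find hex with hvdef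
  have hvspec : u ≤ v ∧ (v = k ∨ NE (v + 1)) := Nat.find_spec hex
  have huv : u ≤ v := hvspec.1
  have hvk : v ≤ k := Nat.find_min' hex ⟨huk, Or.inl rfl⟩
  have hnobad : ∀ j, u < j → j ≤ v → ¬ SW j ∧ ¬ NE j := by
    intro j hj1 hj2
    constructor
    · intro hSWj
      exact (Nat.findGreatest_is_greatest hj1 (by omega)) (Or.inr hSWj)
    · intro hNEj
      have : ¬ (u ≤ j - 1 ∧ (j - 1 = k ∨ NE (j - 1 + 1))) := Nat.find_min hex (by omega)
      exact this ⟨by omega, Or.inr (by rwa [Nat.sub_add_cancel (by omega : 1 ≤ j)])⟩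
  -- boundary conditions
  have h2t : 2 ≤ u → x (u - 1) < a (u + 1) := by
    intro h2
    rcases huSW with h | h
    · omega
    · exact h.1.trans (ainc u hu1 (by omega))
  have h2b : 2 ≤ u → y (u - 1) < b (u + 1) := by
    intro h2
    rcases huSW with h | h
    · omega
    · exact h.2.trans (binc u hu1 (by omega))
  have h1t : v ≤ k - 1 → a v < x v := by
    intro h1
    rcases hvspec.2 with h | h
    · omega
    · have := ainc v (by omega) (by omega)
      have h' : a (v + 1) < x (v + 1 - 1) := h.1
      rw [Nat.add_sub_cancel] at h'
      omega
  have h1b : v ≤ k - 1 → b v < y v := by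
    intro h1
    rcases hvspec.2 with h | h
    · omega
    · have := binc v (by omega) (by omega)
      have h' : b (v + 1) < y (v + 1 - 1) := h.2
      rw [Nat.add_sub_cancel] at h'
      omega
  obtain ⟨l, hul, hlv, hcutl⟩ := exists_cut_in (k := k) a x u v hu1 huv hvk ainc h2t h1t
  obtain ⟨m, hum, hmv, hcutm⟩ := exists_cut_in (k := k) b y u v hu1 huv hvk binc h2b h1b
  obtain ⟨hl1, hlk, hl'1, hl'2⟩ := hcutl
  obtain ⟨hm1, hmk, hm'1, hm'2⟩ := hcutm
  -- mixed points
  have hmix : ∀ i, min l m < i → i ≤ max l m →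
      (x (i - 1), b i) ∈ L ∧ (a i, y (i - 1)) ∈ L := by
    intro i hi1 hi2
    have hiu : u < i := by omega
    have hiv : i ≤ v := by omega
    obtain ⟨hnsw, hnne⟩ := hnobad i hiu hiv
    have hxyi : (x (i - 1), y (i - 1)) ∈ L := (xyL (i - 1) (by omega) (by omega)).2.2.2.2
    have habi : (a i, b i) ∈ L := (abL i (by omega) (by omega)).2.2.2.2
    have := corner hL (p := (x (i-1), y (i-1))) (q := (a i, b i)) hxyi habi
      (by simpa [hSW] using hnsw) (by simpa [hNE] using hnne)
    exact this
  refine ⟨⟨l, m⟩, ⟨hl1, hlk, hl'1, hl'2⟩, ⟨hm1, hmk, hm'1, hm'2⟩, ?_, ?_⟩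
  · refine ⟨?_, ?_, ?_, ?_⟩
    · intro i hi1 hik
      rcases le_or_gt (i + 1) l with hc | hc
      · rw [cp11a hi1 (by omega) (by omega), cp11a (by omega) (by omega) hc]
        exact ainc i hi1 (by omega)
      · rcases le_or_gt i l with hc2 | hc2
        · rw [cp11a hi1 (by omega) hc2, cp11b (by omega) (by omega)]
          have : i + 1 - 1 = i := by omega
          rw [this]
          have : i = l := by omega
          subst this
          exact hl'1 (by omega)
        · rw [cp11b hc2 (by omega), cp11b (by omega) (by omega)]
          have e : i + 1 - 1 = i - 1 + 1 := by omega
          rw [e]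
          exact xinc (i - 1) (by omega) (by omega)
    · intro i hi1 hik
      rcases le_or_gt (i + 1) m with hc | hc
      · rw [cp12a hi1 (by omega) (by omega), cp12a (by omega) (by omega) hc]
        exact binc i hi1 (by omega)
      · rcases le_or_gt i m with hc2 | hc2
        · rw [cp12a hi1 (by omega) hc2, cp12b (by omega) (by omega)]
          have : i + 1 - 1 = i := by omega
          rw [this]
          have : i = m := by omega
          subst this
          exact hm'1 (by omega)
        · rw [cp12b hc2 (by omega), cp12b (by omega) (by omega)]
          have e : i + 1 - 1 = i - 1 + 1 := by omega
          rw [e]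
          exact yinc (i - 1) (by omega) (by omega)
    · intro i hi1 hik
      rcases le_or_gt i l with hc | hc <;> rcases le_or_gt i m with hd | hd
      · rw [cp11a hi1 hik hc, cp12a hi1 hik hd]
        exact abL i hi1 (by omega)
      · rw [cp11a hi1 hik hc, cp12b hd hik]
        obtain ⟨b1, b2, b3, b4, -⟩ := abL i hi1 (by omega)
        obtain ⟨c1, c2, c3, c4, -⟩ := xyL (i - 1) (by omega) (by omega)
        exact ⟨b1, b2, c3, c4, (hmix i (by omega) (by omega)).2⟩
      · rw [cp11b hc hik, cp12a hi1 hik hd]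
        obtain ⟨b1, b2, b3, b4, -⟩ := abL i hi1 (by omega)
        obtain ⟨c1, c2, c3, c4, -⟩ := xyL (i - 1) (by omega) (by omega)
        exact ⟨c1, c2, b3, b4, (hmix i (by omega) (by omega)).1⟩
      · rw [cp11b hc hik, cp12b hd hik]
        exact xyL (i - 1) (by omega) (by omega)
    · intro i hi
      constructor <;> · simp only [cutPair]; rw [if_pos hi]
  · refine ⟨?_, ?_, ?_, ?_⟩
    · intro i hi1 hik
      rcases le_or_gt (i + 1) (l - 1) with hc | hc
      · rw [cp21a hi1 (by omega) (by omega), cp21a (by omega) (by omega) hc]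
        exact xinc i hi1 (by omega)
      · rcases le_or_gt i (l - 1) with hc2 | hc2
        · rw [cp21a hi1 (by omega) hc2, cp21b (by omega) (by omega) (by omega)]
          have hi_eq : i = l - 1 := by omega
          have e : i + 1 + 1 = l + 1 := by omega
          rw [e, hi_eq]
          exact hl'2 (by omega)
        · rw [cp21b hi1 (by omega) (by omega), cp21b (by omega) (by omega) (by omega)]
          exact ainc (i + 1) (by omega) (by omega)
    · intro i hi1 hik
      rcases le_or_gt (i + 1) (m - 1) with hc | hc
      · rw [cp22a hi1 (by omega) (by omega), cp22a (by omega) (by omega) hc]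
        exact yinc i hi1 (by omega)
      · rcases le_or_gt i (m - 1) with hc2 | hc2
        · rw [cp22a hi1 (by omega) hc2, cp22b (by omega) (by omega) (by omega)]
          have hi_eq : i = m - 1 := by omega
          have e : i + 1 + 1 = m + 1 := by omega
          rw [e, hi_eq]
          exact hm'2 (by omega)
        · rw [cp22b hi1 (by omega) (by omega), cp22b (by omega) (by omega) (by omega)]
          exact binc (i + 1) (by omega) (by omega)
    · intro i hi1 hik
      rcases le_or_gt i (l - 1) with hc | hc <;> rcases le_or_gt i (m - 1) with hd | hd
      · rw [cp21a hi1 hik hc, cp22a hi1 hik hd]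
        exact xyL i hi1 (by omega)
      · rw [cp21a hi1 hik hc, cp22b hi1 hik (by omega)]
        obtain ⟨b1, b2, b3, b4, -⟩ := abL (i + 1) (by omega) (by omega)
        obtain ⟨c1, c2, c3, c4, -⟩ := xyL i hi1 (by omega)
        have := (hmix (i + 1) (by omega) (by omega)).1
        rw [Nat.add_sub_cancel] at this
        exact ⟨c1, c2, b3, b4, this⟩
      · rw [cp21b hi1 hik (by omega), cp22a hi1 hik hd]
        obtain ⟨b1, b2, b3, b4, -⟩ := abL (i + 1) (by omega) (by omega)
        obtain ⟨c1, c2, c3, c4, -⟩ := xyL i hi1 (by omega)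
        have := (hmix (i + 1) (by omega) (by omega)).2
        rw [Nat.add_sub_cancel] at this
        exact ⟨b1, b2, c3, c4, this⟩
      · rw [cp21b hi1 hik (by omega), cp22b hi1 hik (by omega)]
        exact abL (i + 1) (by omega) (by omega)
    · intro i hi
      constructor <;> · simp only [cutPair]; rw [if_pos hi]

end Exist

section Optimal

variable {L : Set (ℤ × ℤ)} {A E : ℤ × ℤ} {k : ℕ}
variable {T : ((ℕ → ℤ) × (ℕ → ℤ)) × ((ℕ → ℤ) × (ℕ → ℤ))}

lemma exists_optimal_of_allowed (h : ∃ p, AllowedCut L A E k T p) :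
    ∃ p, OptimalCut L A E k T p := by
  classical
  set S : Set (ℕ × ℕ) := {p | AllowedCut L A E k T p} with hS
  have hsub : S ⊆ Set.Icc (1, 1) (k, k) := by
    rintro ⟨l, m⟩ hp
    obtain ⟨⟨h1, h2, -, -⟩, ⟨h3, h4, -, -⟩, -, -⟩ := hp
    exact ⟨⟨h1, h3⟩, ⟨h2, h4⟩⟩
  have hfin : S.Finite := (Set.finite_Icc _ _).subset hsub
  have hne : S.Nonempty := h
  obtain ⟨p, hpS, hmin⟩ := Set.exists_min_image S
    (fun p => toLex ((((p.1 : ℤ) - p.2).natAbs : ℕ), toLex (p.1, p.2))) hfin hne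
  refine ⟨p, hpS, ?_⟩
  intro q hq
  have := hmin q hq
  rw [Prod.Lex.le_iff] at this
  rcases this with h1 | ⟨h1, h2⟩
  · exact Or.inl h1
  · rw [Prod.Lex.le_iff] at h2
    exact Or.inr ⟨h1, h2⟩

end Optimal

section Transfer

variable {L : Set (ℤ × ℤ)} {A E : ℤ × ℤ} {k : ℕ}
variable {T T' : ((ℕ → ℤ) × (ℕ → ℤ)) × ((ℕ → ℤ) × (ℕ → ℤ))}

lemma transfer (hk : 1 ≤ k)
    (hT1 : T.1 ∈ TR L A E (k + 1)) (hT2 : T.2 ∈ TR L A E (k - 1))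
    (hT1' : T'.1 ∈ TR L A E (k + 1)) (hT2' : T'.2 ∈ TR L A E (k - 1))
    {l m l' m' : ℕ}
    (hp : AllowedCut L A E k T (l, m)) (hq : AllowedCut L A E k T' (l', m'))
    (heq : cutPair k T l m = cutPair k T' l' m') :
    AllowedCut L A E k T' (l, m) := by
  obtain ⟨⟨hl1, hlk, -, -⟩, ⟨hm1, hmk, -, -⟩, hU, hV⟩ := hp
  obtain ⟨⟨hl'1, hl'k, -, -⟩, ⟨hm'1, hm'k, -, -⟩, -, -⟩ := hq
  obtain ⟨ainc, binc, abL, -⟩ := hT1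
  obtain ⟨xinc, yinc, xyL, -⟩ := hT2
  obtain ⟨ainc', binc', abL', -⟩ := hT1'
  obtain ⟨xinc', yinc', xyL', -⟩ := hT2'
  obtain ⟨U1inc, U2inc, UL, -⟩ := hU
  obtain ⟨V1inc, V2inc, VL, -⟩ := hV
  -- junction inequalities from the T side
  have hJ1 : (cutPair k T l m).1.1 l < (cutPair k T l m).2.1 l := by
    rw [cp11a hl1 hlk le_rfl, cp21b hl1 hlk le_rfl]
    exact ainc l hl1 (by omega)
  have hJ2 : 2 ≤ l → l ≤ k - 1 → (cutPair k T l m).2.1 (l - 1) < (cutPair k T l m).1.1 (l + 1) := by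
    intro h2 h3
    rw [cp21a (by omega) (by omega) le_rfl, cp11b (by omega) (by omega),
      show l + 1 - 1 = (l - 1) + 1 by omega]
    exact xinc (l - 1) (by omega) (by omega)
  have hJ3 : (cutPair k T l m).1.2 m < (cutPair k T l m).2.2 m := by
    rw [cp12a hm1 hmk le_rfl, cp22b hm1 hmk le_rfl]
    exact binc m hm1 (by omega)
  have hJ4 : 2 ≤ m → m ≤ k - 1 → (cutPair k T l m).2.2 (m - 1) < (cutPair k T l m).1.2 (m + 1) := by
    intro h2 h3
    rw [cp22a (by omega) (by omega) le_rfl, cp12b (by omega) (by omega),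
      show m + 1 - 1 = (m - 1) + 1 by omega]
    exact yinc (m - 1) (by omega) (by omega)
  -- junction inequalities from the T' side
  have hJ1' : (cutPair k T l m).1.1 l' < (cutPair k T l m).2.1 l' := by
    rw [heq, cp11a hl'1 hl'k le_rfl, cp21b hl'1 hl'k le_rfl]
    exact ainc' l' hl'1 (by omega)
  have hJ2' : 2 ≤ l' → l' ≤ k - 1 →
      (cutPair k T l m).2.1 (l' - 1) < (cutPair k T l m).1.1 (l' + 1) := by
    intro h2 h3
    rw [heq, cp21a (by omega) (by omega) le_rfl, cp11b (by omega) (by omega),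
      show l' + 1 - 1 = (l' - 1) + 1 by omega]
    exact xinc' (l' - 1) (by omega) (by omega)
  have hJ3' : (cutPair k T l m).1.2 m' < (cutPair k T l m).2.2 m' := by
    rw [heq, cp12a hm'1 hm'k le_rfl, cp22b hm'1 hm'k le_rfl]
    exact binc' m' hm'1 (by omega)
  have hJ4' : 2 ≤ m' → m' ≤ k - 1 →
      (cutPair k T l m).2.2 (m' - 1) < (cutPair k T l m).1.2 (m' + 1) := by
    intro h2 h3
    rw [heq, cp22a (by omega) (by omega) le_rfl, cp12b (by omega) (by omega),
      show m' + 1 - 1 = (m' - 1) + 1 by omega]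
    exact yinc' (m' - 1) (by omega) (by omega)
  -- mixed chain points
  have hX : ∀ j, (((l ≤ j ∧ j + 1 ≤ m) ∨ (m ≤ j ∧ j + 1 ≤ l)) ∨
      ((l' ≤ j ∧ j + 1 ≤ m') ∨ (m' ≤ j ∧ j + 1 ≤ l'))) →
      ((cutPair k T l m).2.1 j, (cutPair k T l m).1.2 (j + 1)) ∈ L ∧
      ((cutPair k T l m).1.1 (j + 1), (cutPair k T l m).2.2 j) ∈ L := by
    rintro j ((⟨ha, hb⟩ | ⟨ha, hb⟩) | (⟨ha, hb⟩ | ⟨ha, hb⟩))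
    · rw [cp21b (by omega) (by omega) ha, cp12a (by omega) (by omega) (by omega),
        cp11b (by omega) (by omega), cp22a (by omega) (by omega) (by omega),
        show j + 1 - 1 = j by omega]
      exact ⟨(abL (j + 1) (by omega) (by omega)).2.2.2.2, (xyL j (by omega) (by omega)).2.2.2.2⟩
    · rw [cp21a (by omega) (by omega) (by omega), cp12b (by omega) (by omega),
        cp11a (by omega) (by omega) (by omega), cp22b (by omega) (by omega) ha,
        show j + 1 - 1 = j by omega]
      exact ⟨(xyL j (by omega) (by omega)).2.2.2.2, (abL (j + 1) (by omega) (by omega)).2.2.2.2⟩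
    · rw [heq, cp21b (by omega) (by omega) ha, cp12a (by omega) (by omega) (by omega),
        cp11b (by omega) (by omega), cp22a (by omega) (by omega) (by omega),
        show j + 1 - 1 = j by omega]
      exact ⟨(abL' (j + 1) (by omega) (by omega)).2.2.2.2, (xyL' j (by omega) (by omega)).2.2.2.2⟩
    · rw [heq, cp21a (by omega) (by omega) (by omega), cp12b (by omega) (by omega),
        cp11a (by omega) (by omega) (by omega), cp22b (by omega) (by omega) ha,
        show j + 1 - 1 = j by omega]
      exact ⟨(xyL' j (by omega) (by omega)).2.2.2.2, (abL' (j + 1) (by omega) (by omega)).2.2.2.2⟩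
  -- inversion formulas for T' entries
  have ia1 : ∀ i, 1 ≤ i → i ≤ l' → T'.1.1 i = (cutPair k T l m).1.1 i := by
    intro i h1 h2; rw [heq]; exact (cp11a h1 (by omega) h2).symm
  have ib1 : ∀ i, l' < i → i ≤ k + 1 → T'.1.1 i = (cutPair k T l m).2.1 (i - 1) := by
    intro i h1 h2; rw [heq, cp21b (by omega) (by omega) (by omega),
      show i - 1 + 1 = i by omega]
  have ic1 : ∀ i, 1 ≤ i → i + 1 ≤ l' → T'.2.1 i = (cutPair k T l m).2.1 i := by
    intro i h1 h2; rw [heq]; exact (cp21a h1 (by omega) (by omega)).symm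
  have id1 : ∀ i, l' ≤ i → i ≤ k - 1 → T'.2.1 i = (cutPair k T l m).1.1 (i + 1) := by
    intro i h1 h2; rw [heq, cp11b (by omega) (by omega), show i + 1 - 1 = i by omega]
  have ia2 : ∀ i, 1 ≤ i → i ≤ m' → T'.1.2 i = (cutPair k T l m).1.2 i := by
    intro i h1 h2; rw [heq]; exact (cp12a h1 (by omega) h2).symm
  have ib2 : ∀ i, m' < i → i ≤ k + 1 → T'.1.2 i = (cutPair k T l m).2.2 (i - 1) := by
    intro i h1 h2; rw [heq, cp22b (by omega) (by omega) (by omega),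
      show i - 1 + 1 = i by omega]
  have ic2 : ∀ i, 1 ≤ i → i + 1 ≤ m' → T'.2.2 i = (cutPair k T l m).2.2 i := by
    intro i h1 h2; rw [heq]; exact (cp22a h1 (by omega) (by omega)).symm
  have id2 : ∀ i, m' ≤ i → i ≤ k - 1 → T'.2.2 i = (cutPair k T l m).1.2 (i + 1) := by
    intro i h1 h2; rw [heq, cp12b (by omega) (by omega), show i + 1 - 1 = i by omega]
  -- window formulas for cutPair k T' l m
  have hW11a : ∀ i, 1 ≤ i → i ≤ k → (i ≤ min l l' ∨ max l l' < i) →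
      (cutPair k T' l m).1.1 i = (cutPair k T l m).1.1 i := by
    intro i h1 h2 h3
    rcases le_or_gt i l with hc | hc
    · rw [cp11a h1 h2 hc]; exact ia1 i h1 (by omega)
    · rw [cp11b hc h2, id1 (i - 1) (by omega) (by omega), show i - 1 + 1 = i by omega]
  have hW11b : ∀ i, min l l' < i → i ≤ max l l' →
      (cutPair k T' l m).1.1 i = (cutPair k T l m).2.1 (i - 1) := by
    intro i h1 h2
    rcases le_or_gt i l with hc | hc
    · rw [cp11a (by omega) (by omega) hc]; exact ib1 i (by omega) (by omega)
    · rw [cp11b hc (by omega)]; exact ic1 (i - 1) (by omega) (by omega)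
  have hW21a : ∀ i, 1 ≤ i → i ≤ k → (i < min l l' ∨ max l l' ≤ i) →
      (cutPair k T' l m).2.1 i = (cutPair k T l m).2.1 i := by
    intro i h1 h2 h3
    rcases le_or_gt (i + 1) l with hc | hc
    · rw [cp21a h1 h2 (by omega)]; exact ic1 i h1 (by omega)
    · rw [cp21b h1 h2 (by omega), ib1 (i + 1) (by omega) (by omega),
        show i + 1 - 1 = i by omega]
  have hW21b : ∀ i, min l l' ≤ i → i < max l l' →
      (cutPair k T' l m).2.1 i = (cutPair k T l m).1.1 (i + 1) := by
    intro i h1 h2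
    have h1' : 1 ≤ i := by omega
    rcases le_or_gt (i + 1) l with hc | hc
    · rw [cp21a h1' (by omega) (by omega)]; exact id1 i (by omega) (by omega)
    · rw [cp21b h1' (by omega) (by omega)]; exact ia1 (i + 1) (by omega) (by omega)
  have hW12a : ∀ i, 1 ≤ i → i ≤ k → (i ≤ min m m' ∨ max m m' < i) →
      (cutPair k T' l m).1.2 i = (cutPair k T l m).1.2 i := by
    intro i h1 h2 h3
    rcases le_or_gt i m with hc | hc
    · rw [cp12a h1 h2 hc]; exact ia2 i h1 (by omega)
    · rw [cp12b hc h2, id2 (i - 1) (by omega) (by omega), show i - 1 + 1 = i by omega]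
  have hW12b : ∀ i, min m m' < i → i ≤ max m m' →
      (cutPair k T' l m).1.2 i = (cutPair k T l m).2.2 (i - 1) := by
    intro i h1 h2
    rcases le_or_gt i m with hc | hc
    · rw [cp12a (by omega) (by omega) hc]; exact ib2 i (by omega) (by omega)
    · rw [cp12b hc (by omega)]; exact ic2 (i - 1) (by omega) (by omega)
  have hW22a : ∀ i, 1 ≤ i → i ≤ k → (i < min m m' ∨ max m m' ≤ i) →
      (cutPair k T' l m).2.2 i = (cutPair k T l m).2.2 i := by
    intro i h1 h2 h3
    rcases le_or_gt (i + 1) m with hc | hc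
    · rw [cp22a h1 h2 (by omega)]; exact ic2 i h1 (by omega)
    · rw [cp22b h1 h2 (by omega), ib2 (i + 1) (by omega) (by omega),
        show i + 1 - 1 = i by omega]
  have hW22b : ∀ i, min m m' ≤ i → i < max m m' →
      (cutPair k T' l m).2.2 i = (cutPair k T l m).1.2 (i + 1) := by
    intro i h1 h2
    have h1' : 1 ≤ i := by omega
    rcases le_or_gt (i + 1) m with hc | hc
    · rw [cp22a h1' (by omega) (by omega)]; exact id2 i (by omega) (by omega)
    · rw [cp22b h1' (by omega) (by omega)]; exact ia2 (i + 1) (by omega) (by omega)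
  refine ⟨⟨hl1, hlk, ?_, ?_⟩, ⟨hm1, hmk, ?_, ?_⟩, ⟨?_, ?_, ?_, ?_⟩, ⟨?_, ?_, ?_, ?_⟩⟩
  · -- cond1 top
    intro hc
    rcases lt_trichotomy l l' with h | h | h
    · rw [ia1 l hl1 (by omega), ic1 l hl1 (by omega)]; exact hJ1
    · rw [ia1 l hl1 (by omega), id1 l (by omega) (by omega)]
      exact U1inc l hl1 (by omega)
    · rw [ib1 l (by omega) (by omega), id1 l (by omega) (by omega)]
      exact hJ2 (by omega) (by omega)
  · -- cond2 top
    intro hc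
    rcases lt_trichotomy l l' with h | h | h
    · rw [ic1 (l - 1) (by omega) (by omega), ia1 (l + 1) (by omega) (by omega)]
      exact hJ2 hc (by omega)
    · rw [ic1 (l - 1) (by omega) (by omega), ib1 (l + 1) (by omega) (by omega),
        show l + 1 - 1 = (l - 1) + 1 by omega]
      exact V1inc (l - 1) (by omega) (by omega)
    · rw [id1 (l - 1) (by omega) (by omega), ib1 (l + 1) (by omega) (by omega),
        show l - 1 + 1 = l by omega, show l + 1 - 1 = l by omega]
      exact hJ1
  · -- cond1 bottom
    intro hc
    rcases lt_trichotomy m m' with h | h | h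
    · rw [ia2 m hm1 (by omega), ic2 m hm1 (by omega)]; exact hJ3
    · rw [ia2 m hm1 (by omega), id2 m (by omega) (by omega)]
      exact U2inc m hm1 (by omega)
    · rw [ib2 m (by omega) (by omega), id2 m (by omega) (by omega)]
      exact hJ4 (by omega) (by omega)
  · -- cond2 bottom
    intro hc
    rcases lt_trichotomy m m' with h | h | h
    · rw [ic2 (m - 1) (by omega) (by omega), ia2 (m + 1) (by omega) (by omega)]
      exact hJ4 hc (by omega)
    · rw [ic2 (m - 1) (by omega) (by omega), ib2 (m + 1) (by omega) (by omega),
        show m + 1 - 1 = (m - 1) + 1 by omega]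
      exact V2inc (m - 1) (by omega) (by omega)
    · rw [id2 (m - 1) (by omega) (by omega), ib2 (m + 1) (by omega) (by omega),
        show m - 1 + 1 = m by omega, show m + 1 - 1 = m by omega]
      exact hJ3
  · -- first cut array: top row increasing
    intro i h1 h2
    rcases le_or_gt (i + 1) (min l l') with hA | hA
    · rw [hW11a i h1 (by omega) (Or.inl (by omega)),
        hW11a (i + 1) (by omega) (by omega) (Or.inl hA)]
      exact U1inc i h1 h2
    · rcases le_or_gt i (min l l') with hB | hB
      · rcases le_or_gt (i + 1) (max l l') with hC | hC
        · rw [hW11a i h1 (by omega) (Or.inl hB), hW11b (i + 1) (by omega) hC,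
            show i + 1 - 1 = i by omega]
          rcases le_total l l' with hD | hD
          · rw [show i = l by omega]; exact hJ1
          · rw [show i = l' by omega]; exact hJ1'
        · rw [hW11a i h1 (by omega) (Or.inl hB),
            hW11a (i + 1) (by omega) (by omega) (Or.inr hC)]
          exact U1inc i h1 h2
      · rcases le_or_gt (i + 1) (max l l') with hC | hC
        · rw [hW11b i hB (by omega), hW11b (i + 1) (by omega) hC,
            show i + 1 - 1 = (i - 1) + 1 by omega]
          exact V1inc (i - 1) (by omega) (by omega)
        · rcases le_or_gt i (max l l') with hD | hD
          · rw [hW11b i hB hD, hW11a (i + 1) (by omega) (by omega) (Or.inr (by omega))]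
            rcases le_total l l' with hE | hE
            · rw [show i = l' by omega]; exact hJ2' (by omega) (by omega)
            · rw [show i = l by omega]; exact hJ2 (by omega) (by omega)
          · rw [hW11a i h1 (by omega) (Or.inr hD),
              hW11a (i + 1) (by omega) (by omega) (Or.inr (by omega))]
            exact U1inc i h1 h2
  · -- first cut array: bottom row increasing
    intro i h1 h2
    rcases le_or_gt (i + 1) (min m m') with hA | hA
    · rw [hW12a i h1 (by omega) (Or.inl (by omega)),
        hW12a (i + 1) (by omega) (by omega) (Or.inl hA)]
      exact U2inc i h1 h2
    · rcases le_or_gt i (min m m') with hB | hB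
      · rcases le_or_gt (i + 1) (max m m') with hC | hC
        · rw [hW12a i h1 (by omega) (Or.inl hB), hW12b (i + 1) (by omega) hC,
            show i + 1 - 1 = i by omega]
          rcases le_total m m' with hD | hD
          · rw [show i = m by omega]; exact hJ3
          · rw [show i = m' by omega]; exact hJ3'
        · rw [hW12a i h1 (by omega) (Or.inl hB),
            hW12a (i + 1) (by omega) (by omega) (Or.inr hC)]
          exact U2inc i h1 h2
      · rcases le_or_gt (i + 1) (max m m') with hC | hC
        · rw [hW12b i hB (by omega), hW12b (i + 1) (by omega) hC,
            show i + 1 - 1 = (i - 1) + 1 by omega]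
          exact V2inc (i - 1) (by omega) (by omega)
        · rcases le_or_gt i (max m m') with hD | hD
          · rw [hW12b i hB hD, hW12a (i + 1) (by omega) (by omega) (Or.inr (by omega))]
            rcases le_total m m' with hE | hE
            · rw [show i = m' by omega]; exact hJ4' (by omega) (by omega)
            · rw [show i = m by omega]; exact hJ4 (by omega) (by omega)
          · rw [hW12a i h1 (by omega) (Or.inr hD),
              hW12a (i + 1) (by omega) (by omega) (Or.inr (by omega))]
            exact U2inc i h1 h2
  · -- first cut array: bounds and region
    intro i h1 h2
    by_cases htop : min l l' < i ∧ i ≤ max l l' <;>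
      by_cases hbot : min m m' < i ∧ i ≤ max m m'
    · rw [hW11b i htop.1 htop.2, hW12b i hbot.1 hbot.2]
      exact VL (i - 1) (by omega) (by omega)
    · rw [hW11b i htop.1 htop.2, hW12a i h1 h2 (by omega)]
      obtain ⟨w1, w2, -, -, -⟩ := VL (i - 1) (by omega) (by omega)
      obtain ⟨-, -, w3, w4, -⟩ := UL i h1 h2
      have hXi := (hX (i - 1) (by omega)).1
      rw [show i - 1 + 1 = i by omega] at hXi
      exact ⟨w1, w2, w3, w4, hXi⟩
    · rw [hW11a i h1 h2 (by omega), hW12b i hbot.1 hbot.2]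
      obtain ⟨w1, w2, -, -, -⟩ := UL i h1 h2
      obtain ⟨-, -, w3, w4, -⟩ := VL (i - 1) (by omega) (by omega)
      have hXi := (hX (i - 1) (by omega)).2
      rw [show i - 1 + 1 = i by omega] at hXi
      exact ⟨w1, w2, w3, w4, hXi⟩
    · rw [hW11a i h1 h2 (by omega), hW12a i h1 h2 (by omega)]
      exact UL i h1 h2
  · intro i hi
    constructor <;> · simp only [cutPair]; rw [if_pos hi]
  · -- second cut array: top row increasing
    intro i h1 h2
    rcases lt_or_ge (i + 1) (min l l') with hA | hA
    · rw [hW21a i h1 (by omega) (Or.inl (by omega)),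
        hW21a (i + 1) (by omega) (by omega) (Or.inl hA)]
      exact V1inc i h1 h2
    · rcases lt_or_ge i (min l l') with hB | hB
      · rcases lt_or_ge (i + 1) (max l l') with hC | hC
        · rw [hW21a i h1 (by omega) (Or.inl hB), hW21b (i + 1) hA hC]
          rcases le_total l l' with hD | hD
          · rw [show i + 1 + 1 = l + 1 by omega, show i = l - 1 by omega]
            exact hJ2 (by omega) (by omega)
          · rw [show i + 1 + 1 = l' + 1 by omega, show i = l' - 1 by omega]
            exact hJ2' (by omega) (by omega)
        · rw [hW21a i h1 (by omega) (Or.inl hB),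
            hW21a (i + 1) (by omega) (by omega) (Or.inr hC)]
          exact V1inc i h1 h2
      · rcases lt_or_ge (i + 1) (max l l') with hC | hC
        · rw [hW21b i hB (by omega), hW21b (i + 1) (by omega) hC]
          exact U1inc (i + 1) (by omega) (by omega)
        · rcases lt_or_ge i (max l l') with hD | hD
          · rw [hW21b i hB hD, hW21a (i + 1) (by omega) (by omega) (Or.inr hC)]
            rcases le_total l l' with hE | hE
            · rw [show i + 1 = l' by omega]; exact hJ1'
            · rw [show i + 1 = l by omega]; exact hJ1
          · rw [hW21a i h1 (by omega) (Or.inr hD),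
              hW21a (i + 1) (by omega) (by omega) (Or.inr (by omega))]
            exact V1inc i h1 h2
  · -- second cut array: bottom row increasing
    intro i h1 h2
    rcases lt_or_ge (i + 1) (min m m') with hA | hA
    · rw [hW22a i h1 (by omega) (Or.inl (by omega)),
        hW22a (i + 1) (by omega) (by omega) (Or.inl hA)]
      exact V2inc i h1 h2
    · rcases lt_or_ge i (min m m') with hB | hB
      · rcases lt_or_ge (i + 1) (max m m') with hC | hC
        · rw [hW22a i h1 (by omega) (Or.inl hB), hW22b (i + 1) hA hC]
          rcases le_total m m' with hD | hD
          · rw [show i + 1 + 1 = m + 1 by omega, show i = m - 1 by omega]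
            exact hJ4 (by omega) (by omega)
          · rw [show i + 1 + 1 = m' + 1 by omega, show i = m' - 1 by omega]
            exact hJ4' (by omega) (by omega)
        · rw [hW22a i h1 (by omega) (Or.inl hB),
            hW22a (i + 1) (by omega) (by omega) (Or.inr hC)]
          exact V2inc i h1 h2
      · rcases lt_or_ge (i + 1) (max m m') with hC | hC
        · rw [hW22b i hB (by omega), hW22b (i + 1) (by omega) hC]
          exact U2inc (i + 1) (by omega) (by omega)
        · rcases lt_or_ge i (max m m') with hD | hD
          · rw [hW22b i hB hD, hW22a (i + 1) (by omega) (by omega) (Or.inr hC)]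
            rcases le_total m m' with hE | hE
            · rw [show i + 1 = m' by omega]; exact hJ3'
            · rw [show i + 1 = m by omega]; exact hJ3
          · rw [hW22a i h1 (by omega) (Or.inr hD),
              hW22a (i + 1) (by omega) (by omega) (Or.inr (by omega))]
            exact V2inc i h1 h2
  · -- second cut array: bounds and region
    intro i h1 h2
    by_cases htop : min l l' ≤ i ∧ i < max l l' <;>
      by_cases hbot : min m m' ≤ i ∧ i < max m m'
    · rw [hW21b i htop.1 htop.2, hW22b i hbot.1 hbot.2]
      exact UL (i + 1) (by omega) (by omega)
    · rw [hW21b i htop.1 htop.2, hW22a i h1 h2 (by omega)]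
      obtain ⟨w1, w2, -, -, -⟩ := UL (i + 1) (by omega) (by omega)
      obtain ⟨-, -, w3, w4, -⟩ := VL i h1 h2
      exact ⟨w1, w2, w3, w4, (hX i (by omega)).2⟩
    · rw [hW21a i h1 h2 (by omega), hW22b i hbot.1 hbot.2]
      obtain ⟨w1, w2, -, -, -⟩ := VL i h1 h2
      obtain ⟨-, -, w3, w4, -⟩ := UL (i + 1) (by omega) (by omega)
      exact ⟨w1, w2, w3, w4, (hX i (by omega)).1⟩
    · rw [hW21a i h1 h2 (by omega), hW22a i h1 h2 (by omega)]
      exact VL i h1 h2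
  · intro i hi
    constructor <;> · simp only [cutPair]; rw [if_pos hi]

end Transfer

/-- The map `I` cutting a pair `(T₁, T₂) ∈ T^L_{k+1} × T^L_{k-1}` at its optimal cutting
point is well defined (the optimal cutting point exists) and is an injection into
`T^L_k × T^L_k`. -/
theorem cut_injection (L : Set (ℤ × ℤ)) (hL : IsLadderRegion L) (A E : ℤ × ℤ)
    (k : ℕ) (hk : 1 ≤ k) :
    (∀ T ∈ (TR L A E (k + 1)) ×ˢ (TR L A E (k - 1)), ∃ p, OptimalCut L A E k T p) ∧
    (∀ opt : ((ℕ → ℤ) × (ℕ → ℤ)) × ((ℕ → ℤ) × (ℕ → ℤ)) → ℕ × ℕ,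
      (∀ T ∈ (TR L A E (k + 1)) ×ˢ (TR L A E (k - 1)), OptimalCut L A E k T (opt T)) →
      Set.MapsTo (fun T => cutPair k T (opt T).1 (opt T).2)
        ((TR L A E (k + 1)) ×ˢ (TR L A E (k - 1))) ((TR L A E k) ×ˢ (TR L A E k)) ∧
      Set.InjOn (fun T => cutPair k T (opt T).1 (opt T).2)
        ((TR L A E (k + 1)) ×ˢ (TR L A E (k - 1)))) := by
  constructor
  · rintro T ⟨hT1, hT2⟩
    exact exists_optimal_of_allowed (exists_allowed hL hk hT1 hT2)
  · intro opt hopt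
    constructor
    · rintro T hT
      have h := (hopt T hT).1
      exact ⟨h.2.2.1, h.2.2.2⟩
    · rintro T ⟨hT1, hT2⟩ T' ⟨hT1', hT2'⟩ heq
      simp only at heq
      obtain ⟨hpA, hpOpt⟩ := hopt T ⟨hT1, hT2⟩
      obtain ⟨hqA, hqOpt⟩ := hopt T' ⟨hT1', hT2'⟩
      have hpA' : AllowedCut L A E k T ((opt T).1, (opt T).2) := hpA
      have hqA' : AllowedCut L A E k T' ((opt T').1, (opt T').2) := hqA
      have htr1 : AllowedCut L A E k T' ((opt T).1, (opt T).2) :=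
        transfer hk hT1 hT2 hT1' hT2' hpA' hqA' heq
      have htr2 : AllowedCut L A E k T ((opt T').1, (opt T').2) :=
        transfer hk hT1' hT2' hT1 hT2 hqA' hpA' heq.symm
      have h1 := hpOpt (opt T') htr2
      have h2 := hqOpt (opt T) htr1
      have e1 : (opt T).1 = (opt T').1 ∧ (opt T).2 = (opt T').2 := by omega
      obtain ⟨el, em⟩ := e1
      -- reconstruct T = T' from the equal cut pairs and equal cutting points
      obtain ⟨l1, lk, -, -⟩ := hpA.1
      obtain ⟨m1, mk, -, -⟩ := hpA.2.1
      obtain ⟨-, -, -, ab0⟩ := hT1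
      obtain ⟨-, -, -, xy0⟩ := hT2
      obtain ⟨-, -, -, ab0'⟩ := hT1'
      obtain ⟨-, -, -, xy0'⟩ := hT2'
      set l := (opt T).1 with hldef
      set m := (opt T).2 with hmdef
      rw [← el, ← em] at heq
      have g11 : T.1.1 = T'.1.1 := by
        funext i
        by_cases hi : i = 0 ∨ k + 1 < i
        · rw [(ab0 i hi).1, (ab0' i hi).1]
        · rcases le_or_gt i l with hc | hc
          · calc T.1.1 i = (cutPair k T l m).1.1 i := (cp11a (by omega) (by omega) hc).symm
              _ = T'.1.1 i := by rw [heq]; exact cp11a (by omega) (by omega) hc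
          · calc T.1.1 i = (cutPair k T l m).2.1 (i - 1) := by
                  rw [cp21b (by omega) (by omega) (by omega), show i - 1 + 1 = i by omega]
              _ = T'.1.1 i := by
                  rw [heq, cp21b (by omega) (by omega) (by omega), show i - 1 + 1 = i by omega]
      have g12 : T.1.2 = T'.1.2 := by
        funext i
        by_cases hi : i = 0 ∨ k + 1 < i
        · rw [(ab0 i hi).2, (ab0' i hi).2]
        · rcases le_or_gt i m with hc | hc
          · calc T.1.2 i = (cutPair k T l m).1.2 i := (cp12a (by omega) (by omega) hc).symm
              _ = T'.1.2 i := by rw [heq]; exact cp12a (by omega) (by omega) hc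
          · calc T.1.2 i = (cutPair k T l m).2.2 (i - 1) := by
                  rw [cp22b (by omega) (by omega) (by omega), show i - 1 + 1 = i by omega]
              _ = T'.1.2 i := by
                  rw [heq, cp22b (by omega) (by omega) (by omega), show i - 1 + 1 = i by omega]
      have g21 : T.2.1 = T'.2.1 := by
        funext i
        by_cases hi : i = 0 ∨ k - 1 < i
        · rw [(xy0 i hi).1, (xy0' i hi).1]
        · rcases le_or_gt (i + 1) l with hc | hc
          · calc T.2.1 i = (cutPair k T l m).2.1 i := (cp21a (by omega) (by omega) (by omega)).symm
              _ = T'.2.1 i := by rw [heq]; exact cp21a (by omega) (by omega) (by omega)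
          · calc T.2.1 i = (cutPair k T l m).1.1 (i + 1) := by
                  rw [cp11b (by omega) (by omega), show i + 1 - 1 = i by omega]
              _ = T'.2.1 i := by
                  rw [heq, cp11b (by omega) (by omega), show i + 1 - 1 = i by omega]
      have g22 : T.2.2 = T'.2.2 := by
        funext i
        by_cases hi : i = 0 ∨ k - 1 < i
        · rw [(xy0 i hi).2, (xy0' i hi).2]
        · rcases le_or_gt (i + 1) m with hc | hc
          · calc T.2.2 i = (cutPair k T l m).2.2 i := (cp22a (by omega) (by omega) (by omega)).symm
              _ = T'.2.2 i := by rw [heq]; exact cp22a (by omega) (by omega) (by omega)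
          · calc T.2.2 i = (cutPair k T l m).1.2 (i + 1) := by
                  rw [cp12b (by omega) (by omega), show i + 1 - 1 = i by omega]
              _ = T'.2.2 i := by
                  rw [heq, cp12b (by omega) (by omega), show i + 1 - 1 = i by omega]
      exact Prod.ext (Prod.ext g11 g12) (Prod.ext g21 g22)
end

section
/- Consequently, for a ladder region L and bounds A = (0, u₁ - 1), E = (a - v₁ + 1, b), the sequence h_k = |T^L_k(A → E)|, counting two-rowed arrays of length k bounded by A and E in L, is log-concave: h_{k-1} h_{k+1} ≤ h_k² for all k ≥ 1. -/
/-- The set of two-rowed arrays of length `k` bounded by `A` and `E` which are in `L`. -/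
def TwoRowed (L : Set (ℤ × ℤ)) (A E : ℤ × ℤ) (k : ℕ) :
    Set ((Fin k → ℤ) × (Fin k → ℤ)) :=
  {T | StrictMono T.1 ∧ StrictMono T.2 ∧
    (∀ i, A.1 ≤ T.1 i ∧ T.1 i ≤ E.1 - 1 ∧ A.2 + 1 ≤ T.2 i ∧ T.2 i ≤ E.2) ∧
    (∀ i, (T.1 i, T.2 i) ∈ L)}

namespace HVproof

open scoped Classical

/-- Glue `x[0..i]` with `x'[i..]`. -/
def glueA (x x' : ℕ → ℤ) (i : ℕ) : ℕ → ℤ := fun m => if m ≤ i then x m else x' (m - 1)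

/-- Glue `x'[0..i-1]` with `x[i+1..]`. -/
def glueB (x x' : ℕ → ℤ) (i : ℕ) : ℕ → ℤ := fun m => if m < i then x' m else x (m + 1)

lemma gA_lo {x x' : ℕ → ℤ} {i m : ℕ} (h : m ≤ i) : glueA x x' i m = x m := if_pos h
lemma gA_hi {x x' : ℕ → ℤ} {i m : ℕ} (h : i < m) : glueA x x' i m = x' (m - 1) :=
  if_neg (by omega)
lemma gB_lo {x x' : ℕ → ℤ} {i m : ℕ} (h : m < i) : glueB x x' i m = x' m := if_pos h
lemma gB_hi {x x' : ℕ → ℤ} {i m : ℕ} (h : i ≤ m) : glueB x x' i m = x (m + 1) :=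
  if_neg (by omega)

/-- Validity of a two-rowed array of length `n`, as `ℕ`-indexed sequences. -/
structure OK (L : Set (ℤ × ℤ)) (A E : ℤ × ℤ) (n : ℕ) (x y : ℕ → ℤ) : Prop where
  sx : ∀ m, m + 1 < n → x m < x (m + 1)
  sy : ∀ m, m + 1 < n → y m < y (m + 1)
  pt : ∀ m, m < n →
    (A.1 ≤ x m ∧ x m ≤ E.1 - 1 ∧ A.2 + 1 ≤ y m ∧ y m ≤ E.2) ∧ (x m, y m) ∈ L

/-- Validity of the cut `(i, j)`: both glued arrays are valid (of lengths `nR`, `nS`). -/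
def VC (L : Set (ℤ × ℤ)) (A E : ℤ × ℤ) (nR nS : ℕ) (x y x' y' : ℕ → ℤ) (i j : ℕ) : Prop :=
  OK L A E nR (glueA x x' i) (glueA y y' j) ∧ OK L A E nS (glueB x x' i) (glueB y y' j)

variable {L : Set (ℤ × ℤ)} {A E : ℤ × ℤ}

lemma strict_of_adj {g : ℕ → ℤ} {n : ℕ} (h : ∀ m, m + 1 < n → g m < g (m + 1)) :
    ∀ a b, a < b → b < n → g a < g b := by
  intro a b hab hbn
  induction b with
  | zero => omega
  | succ b ih =>
    rcases Nat.lt_or_ge a b with h' | h'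
    · exact (ih h' (by omega)).trans (h b hbn)
    · have : a = b := by omega
      subst this; exact h a hbn

end HVproof
namespace HVproof2
open HVproof
variable {L : Set (ℤ × ℤ)} {A E : ℤ × ℤ}

/-- Extend a `Fin n`-indexed sequence to `ℕ`. -/
def extZ (n : ℕ) (f : Fin n → ℤ) : ℕ → ℤ := fun m => if h : m < n then f ⟨m, h⟩ else 0

lemma extZ_eq {n : ℕ} (f : Fin n → ℤ) (m : Fin n) : extZ n f m.val = f m := by
  simp [extZ]

lemma OK_of_mem {n : ℕ} {T : (Fin n → ℤ) × (Fin n → ℤ)} (hT : T ∈ TwoRowed L A E n) :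
    OK L A E n (extZ n T.1) (extZ n T.2) := by
  obtain ⟨h1, h2, h3, h4⟩ := hT
  constructor
  · intro m hm
    rw [show extZ n T.1 m = T.1 ⟨m, by omega⟩ from dif_pos (by omega),
      show extZ n T.1 (m+1) = T.1 ⟨m+1, by omega⟩ from dif_pos (by omega)]
    exact h1 (by simp [Fin.mk_lt_mk])
  · intro m hm
    rw [show extZ n T.2 m = T.2 ⟨m, by omega⟩ from dif_pos (by omega),
      show extZ n T.2 (m+1) = T.2 ⟨m+1, by omega⟩ from dif_pos (by omega)]
    exact h2 (by simp [Fin.mk_lt_mk])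
  · intro m hm
    rw [show extZ n T.1 m = T.1 ⟨m, hm⟩ from dif_pos hm,
      show extZ n T.2 m = T.2 ⟨m, hm⟩ from dif_pos hm]
    exact ⟨h3 ⟨m, hm⟩, h4 ⟨m, hm⟩⟩

lemma mem_of_OK {n : ℕ} {X Y : ℕ → ℤ} (h : OK L A E n X Y) :
    ((fun m : Fin n => X m.val), (fun m : Fin n => Y m.val)) ∈ TwoRowed L A E n := by
  refine ⟨?_, ?_, ?_, ?_⟩
  · intro a b hab; exact strict_of_adj h.sx a.val b.val hab b.isLt
  · intro a b hab; exact strict_of_adj h.sy a.val b.val hab b.isLt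
  · intro m; exact (h.pt m.val m.isLt).1
  · intro m; exact (h.pt m.val m.isLt).2

lemma twoRowed_finite (n : ℕ) : (TwoRowed L A E n).Finite := by
  have hsub : TwoRowed L A E n ⊆
      (Set.univ.pi fun _ : Fin n => Set.Icc A.1 (E.1 - 1)) ×ˢ
      (Set.univ.pi fun _ : Fin n => Set.Icc (A.2 + 1) E.2) := by
    rintro ⟨f, g⟩ ⟨_, _, hb, _⟩
    exact ⟨fun i _ => ⟨(hb i).1, (hb i).2.1⟩, fun i _ => ⟨(hb i).2.2.1, (hb i).2.2.2⟩⟩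
  exact (Set.Finite.prod (Set.Finite.pi fun _ => Set.finite_Icc _ _)
    (Set.Finite.pi fun _ => Set.finite_Icc _ _)).subset hsub

/-- Pointwise involutivity: gluing back recovers the first row. -/
lemma glueA_inv (x x' : ℕ → ℤ) (i : ℕ) (m : ℕ) :
    glueA (glueA x x' i) (glueB x x' i) i m = x m := by
  rcases le_or_gt m i with h | h
  · rw [gA_lo h, gA_lo h]
  · rw [gA_hi h, gB_hi (by omega), show m - 1 + 1 = m by omega]

/-- Pointwise involutivity: gluing back recovers the second row. -/
lemma glueB_inv (x x' : ℕ → ℤ) (i : ℕ) (m : ℕ) :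
    glueB (glueA x x' i) (glueB x x' i) i m = x' m := by
  rcases Nat.lt_or_ge m i with h | h
  · rw [gB_lo h, gB_lo h]
  · rw [gB_hi h, gA_hi (by omega), show m + 1 - 1 = m from rfl]

/-- `glueA r r' i m` only depends on values of `r`, `r'` below `k` (for `m < k+1`). -/
lemma glueA_congr {r r' ρ ρ' : ℕ → ℤ} {i k : ℕ} (hik : i ≤ k - 1) (hk : 1 ≤ k)
    (hr : ∀ t, t < k → r t = ρ t) (hr' : ∀ t, t < k → r' t = ρ' t) :
    ∀ m, m < k + 1 → glueA r r' i m = glueA ρ ρ' i m := by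
  intro m hm
  rcases le_or_gt m i with h | h
  · rw [gA_lo h, gA_lo h]; exact hr m (by omega)
  · rw [gA_hi h, gA_hi h]; exact hr' (m - 1) (by omega)

lemma glueB_congr {r r' ρ ρ' : ℕ → ℤ} {i k : ℕ} (hik : i ≤ k - 1) (hk : 1 ≤ k)
    (hr : ∀ t, t < k → r t = ρ t) (hr' : ∀ t, t < k → r' t = ρ' t) :
    ∀ m, m < k - 1 → glueB r r' i m = glueB ρ ρ' i m := by
  intro m hm
  rcases Nat.lt_or_ge m i with h | h
  · rw [gB_lo h, gB_lo h]; exact hr' m (by omega)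
  · rw [gB_hi h, gB_hi h]; exact hr (m + 1) (by omega)

lemma OK_congr {n : ℕ} {X Y X' Y' : ℕ → ℤ} (hX : ∀ m, m < n → X m = X' m)
    (hY : ∀ m, m < n → Y m = Y' m) (h : OK L A E n X Y) : OK L A E n X' Y' := by
  constructor
  · intro m hm; rw [← hX m (by omega), ← hX (m+1) hm]; exact h.sx m hm
  · intro m hm; rw [← hY m (by omega), ← hY (m+1) hm]; exact h.sy m hm
  · intro m hm; rw [← hX m hm, ← hY m hm]; exact h.pt m hm

end HVproof2
namespace HVproof3
open HVproof HVproof2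
variable {L : Set (ℤ × ℤ)} {A E : ℤ × ℤ}

/-- Case `I ≤ J` of the existence of a valid cut. -/
lemma helper1 (hL : IsLadderRegion L) {k : ℕ} (hk : 1 ≤ k) {x y x' y' : ℕ → ℤ} {I J : ℕ}
    (hP : OK L A E (k+1) x y) (hQ : OK L A E (k-1) x' y')
    (hIk : I ≤ k-1) (hJk : J ≤ k-1) (hIJ : I ≤ J)
    (hAI : I = k-1 ∨ x I < x' I)
    (hBJ : J = k-1 ∨ y J < y' J)
    (hUI : I = 0 ∨ x' (I-1) ≤ x I)
    (hVJ : J = 0 ∨ y' (J-1) ≤ y J)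
    (hZX : ∀ m, I < m → m ≤ J → x m ≤ x' (m-1))
    (hZY : ∀ m, I < m → m ≤ J → y' (m-1) ≤ y m) :
    VC L A E k k x y x' y' I J := by
  constructor
  · -- the R array
    constructor
    · intro m hm
      rcases Nat.lt_or_ge m I with h | h
      · rw [gA_lo (by omega), gA_lo (by omega)]; exact hP.sx m (by omega)
      rcases Nat.eq_or_lt_of_le h with h' | h'
      · rw [gA_lo (by omega), gA_hi (by omega), show m + 1 - 1 = m from rfl, ← h']
        rcases hAI with h2 | h2
        · omega
        · exact h2
      · rw [gA_hi h', gA_hi (by omega), show m + 1 - 1 = m from rfl]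
        have := hQ.sx (m-1) (by omega)
        rwa [show m - 1 + 1 = m by omega] at this
    · intro m hm
      rcases Nat.lt_or_ge m J with h | h
      · rw [gA_lo (by omega), gA_lo (by omega)]; exact hP.sy m (by omega)
      rcases Nat.eq_or_lt_of_le h with h' | h'
      · rw [gA_lo (by omega), gA_hi (by omega), show m + 1 - 1 = m from rfl, ← h']
        rcases hBJ with h2 | h2
        · omega
        · exact h2
      · rw [gA_hi h', gA_hi (by omega), show m + 1 - 1 = m from rfl]
        have := hQ.sy (m-1) (by omega)
        rwa [show m - 1 + 1 = m by omega] at this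
    · intro m hm
      rcases le_or_gt m I with h | h
      · rw [gA_lo h, gA_lo (by omega)]; exact hP.pt m (by omega)
      rcases le_or_gt m J with h2 | h2
      · -- mixed entry (x'(m-1), y m)
        rw [gA_hi h, gA_lo h2]
        obtain ⟨bP, mP⟩ := hP.pt m (by omega)
        obtain ⟨bQ, mQ⟩ := hQ.pt (m-1) (by omega)
        refine ⟨⟨bQ.1, bQ.2.1, bP.2.2.1, bP.2.2.2⟩, ?_⟩
        exact hL (x m) (y m) (x' (m-1)) (y' (m-1)) mP mQ (hZX m h h2) (hZY m h h2)
          (x' (m-1)) (y m) (hZX m h h2) le_rfl (hZY m h h2) le_rfl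
      · rw [gA_hi h, gA_hi h2]; exact hQ.pt (m-1) (by omega)
  · -- the S array
    constructor
    · intro m hm
      rcases Nat.lt_or_ge (m+1) I with h | h
      · rw [gB_lo (by omega), gB_lo (by omega)]; exact hQ.sx m (by omega)
      rcases Nat.lt_or_ge m I with h' | h'
      · -- m+1 = I, m = I-1
        rw [gB_lo h', gB_hi (by omega)]
        have hI0 : I ≠ 0 := by omega
        rcases hUI with h2 | h2
        · omega
        · calc x' m = x' (I-1) := by rw [show m = I - 1 by omega]
            _ ≤ x I := h2
            _ < x (I+1) := hP.sx I (by omega)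
            _ = x (m+1+1) := by rw [show m + 1 = I by omega]
      · rw [gB_hi h', gB_hi (by omega)]; exact hP.sx (m+1) (by omega)
    · intro m hm
      rcases Nat.lt_or_ge (m+1) J with h | h
      · rw [gB_lo (by omega), gB_lo (by omega)]; exact hQ.sy m (by omega)
      rcases Nat.lt_or_ge m J with h' | h'
      · rw [gB_lo h', gB_hi (by omega)]
        rcases hVJ with h2 | h2
        · omega
        · calc y' m = y' (J-1) := by rw [show m = J - 1 by omega]
            _ ≤ y J := h2
            _ < y (J+1) := hP.sy J (by omega)
            _ = y (m+1+1) := by rw [show m + 1 = J by omega]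
      · rw [gB_hi h', gB_hi (by omega)]; exact hP.sy (m+1) (by omega)
    · intro m hm
      rcases Nat.lt_or_ge m I with h | h
      · rw [gB_lo h, gB_lo (by omega)]; exact hQ.pt m (by omega)
      rcases Nat.lt_or_ge m J with h2 | h2
      · -- mixed entry (x (m+1), y' m)
        rw [gB_hi h, gB_lo h2]
        obtain ⟨bP, mP⟩ := hP.pt (m+1) (by omega)
        obtain ⟨bQ, mQ⟩ := hQ.pt m (by omega)
        refine ⟨⟨bP.1, bP.2.1, bQ.2.2.1, bQ.2.2.2⟩, ?_⟩
        have e1 : x (m+1) ≤ x' m := by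
          have := hZX (m+1) (by omega) (by omega); rwa [show m + 1 - 1 = m from rfl] at this
        have e2 : y' m ≤ y (m+1) := by
          have := hZY (m+1) (by omega) (by omega); rwa [show m + 1 - 1 = m from rfl] at this
        exact hL (x (m+1)) (y (m+1)) (x' m) (y' m) mP mQ e1 e2
          (x (m+1)) (y' m) le_rfl e1 le_rfl e2
      · rw [gB_hi h, gB_hi h2]; exact hP.pt (m+1) (by omega)

/-- Case `J ≤ I` of the existence of a valid cut. -/
lemma helper2 (hL : IsLadderRegion L) {k : ℕ} (hk : 1 ≤ k) {x y x' y' : ℕ → ℤ} {I J : ℕ}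
    (hP : OK L A E (k+1) x y) (hQ : OK L A E (k-1) x' y')
    (hIk : I ≤ k-1) (hJk : J ≤ k-1) (hJI : J ≤ I)
    (hAI : I = k-1 ∨ x I < x' I)
    (hBJ : J = k-1 ∨ y J < y' J)
    (hUI : I = 0 ∨ x' (I-1) ≤ x I)
    (hVJ : J = 0 ∨ y' (J-1) ≤ y J)
    (hZX : ∀ m, J < m → m ≤ I → x' (m-1) ≤ x m)
    (hZY : ∀ m, J < m → m ≤ I → y m ≤ y' (m-1)) :
    VC L A E k k x y x' y' I J := by
  constructor
  · constructor
    · intro m hm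
      rcases Nat.lt_or_ge m I with h | h
      · rw [gA_lo (by omega), gA_lo (by omega)]; exact hP.sx m (by omega)
      rcases Nat.eq_or_lt_of_le h with h' | h'
      · rw [gA_lo (by omega), gA_hi (by omega), show m + 1 - 1 = m from rfl, ← h']
        rcases hAI with h2 | h2
        · omega
        · exact h2
      · rw [gA_hi h', gA_hi (by omega), show m + 1 - 1 = m from rfl]
        have := hQ.sx (m-1) (by omega)
        rwa [show m - 1 + 1 = m by omega] at this
    · intro m hm
      rcases Nat.lt_or_ge m J with h | h
      · rw [gA_lo (by omega), gA_lo (by omega)]; exact hP.sy m (by omega)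
      rcases Nat.eq_or_lt_of_le h with h' | h'
      · rw [gA_lo (by omega), gA_hi (by omega), show m + 1 - 1 = m from rfl, ← h']
        rcases hBJ with h2 | h2
        · omega
        · exact h2
      · rw [gA_hi h', gA_hi (by omega), show m + 1 - 1 = m from rfl]
        have := hQ.sy (m-1) (by omega)
        rwa [show m - 1 + 1 = m by omega] at this
    · intro m hm
      rcases le_or_gt m J with h | h
      · rw [gA_lo (by omega), gA_lo h]; exact hP.pt m (by omega)
      rcases le_or_gt m I with h2 | h2
      · -- mixed entry (x m, y'(m-1))
        rw [gA_lo h2, gA_hi h]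
        obtain ⟨bP, mP⟩ := hP.pt m (by omega)
        obtain ⟨bQ, mQ⟩ := hQ.pt (m-1) (by omega)
        refine ⟨⟨bP.1, bP.2.1, bQ.2.2.1, bQ.2.2.2⟩, ?_⟩
        exact hL (x' (m-1)) (y' (m-1)) (x m) (y m) mQ mP (hZX m h h2) (hZY m h h2)
          (x m) (y' (m-1)) (hZX m h h2) le_rfl (hZY m h h2) le_rfl
      · rw [gA_hi (by omega), gA_hi h]; exact hQ.pt (m-1) (by omega)
  · constructor
    · intro m hm
      rcases Nat.lt_or_ge (m+1) I with h | h
      · rw [gB_lo (by omega), gB_lo (by omega)]; exact hQ.sx m (by omega)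
      rcases Nat.lt_or_ge m I with h' | h'
      · rw [gB_lo h', gB_hi (by omega)]
        rcases hUI with h2 | h2
        · omega
        · calc x' m = x' (I-1) := by rw [show m = I - 1 by omega]
            _ ≤ x I := h2
            _ < x (I+1) := hP.sx I (by omega)
            _ = x (m+1+1) := by rw [show m + 1 = I by omega]
      · rw [gB_hi h', gB_hi (by omega)]; exact hP.sx (m+1) (by omega)
    · intro m hm
      rcases Nat.lt_or_ge (m+1) J with h | h
      · rw [gB_lo (by omega), gB_lo (by omega)]; exact hQ.sy m (by omega)
      rcases Nat.lt_or_ge m J with h' | h'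
      · rw [gB_lo h', gB_hi (by omega)]
        rcases hVJ with h2 | h2
        · omega
        · calc y' m = y' (J-1) := by rw [show m = J - 1 by omega]
            _ ≤ y J := h2
            _ < y (J+1) := hP.sy J (by omega)
            _ = y (m+1+1) := by rw [show m + 1 = J by omega]
      · rw [gB_hi h', gB_hi (by omega)]; exact hP.sy (m+1) (by omega)
    · intro m hm
      rcases Nat.lt_or_ge m J with h | h
      · rw [gB_lo (by omega), gB_lo h]; exact hQ.pt m (by omega)
      rcases Nat.lt_or_ge m I with h2 | h2
      · -- mixed entry (x' m, y (m+1))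
        rw [gB_lo h2, gB_hi h]
        obtain ⟨bP, mP⟩ := hP.pt (m+1) (by omega)
        obtain ⟨bQ, mQ⟩ := hQ.pt m (by omega)
        refine ⟨⟨bQ.1, bQ.2.1, bP.2.2.1, bP.2.2.2⟩, ?_⟩
        have e1 : x' m ≤ x (m+1) := by
          have := hZX (m+1) (by omega) (by omega); rwa [show m + 1 - 1 = m from rfl] at this
        have e2 : y (m+1) ≤ y' m := by
          have := hZY (m+1) (by omega) (by omega); rwa [show m + 1 - 1 = m from rfl] at this
        exact hL (x' m) (y' m) (x (m+1)) (y (m+1)) mQ mP e1 e2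
          (x' m) (y (m+1)) le_rfl e1 le_rfl e2
      · rw [gB_hi (by omega), gB_hi h]; exact hP.pt (m+1) (by omega)

end HVproof3
namespace HVproof4
open HVproof HVproof2 HVproof3
open scoped Classical
variable {L : Set (ℤ × ℤ)} {A E : ℤ × ℤ}

lemma exists_cut (hL : IsLadderRegion L) {k : ℕ} (hk : 1 ≤ k) {x y x' y' : ℕ → ℤ}
    (hP : OK L A E (k+1) x y) (hQ : OK L A E (k-1) x' y') :
    ∃ n, n < k * k ∧ VC L A E k k x y x' y' (n / k) (n % k) := by
  -- the predicate for m*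
  set P0 : ℕ → Prop := fun m => m = 0 ∨ (x' (m-1) < x m ∧ y' (m-1) < y m) with hP0
  have hP00 : P0 0 := Or.inl rfl
  set M : ℕ := Nat.findGreatest P0 (k-1) with hM
  have hMspec : P0 M := Nat.findGreatest_spec (Nat.zero_le _) hP00
  have hMle : M ≤ k - 1 := Nat.findGreatest_le _
  have hMmax : ∀ m, M < m → m ≤ k - 1 → ¬ P0 m := fun m h1 h2 =>
    Nat.findGreatest_is_greatest h1 h2
  -- I: least t ≥ M with (t = k-1 ∨ x t < x' t)
  have hexI : ∃ s, M + s = k - 1 ∨ x (M + s) < x' (M + s) := ⟨k - 1 - M, Or.inl (by omega)⟩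
  set I : ℕ := M + Nat.find hexI with hI
  have hIspec : I = k - 1 ∨ x I < x' I := Nat.find_spec hexI
  have hIle : I ≤ k - 1 := by
    have := Nat.find_min' hexI (m := k - 1 - M) (Or.inl (by omega))
    omega
  have hIM : M ≤ I := by omega
  have hImin : ∀ t, M ≤ t → t < I → ¬(t = k - 1 ∨ x t < x' t) := by
    intro t h1 h2
    have := Nat.find_min hexI (m := t - M) (by omega)
    rwa [show M + (t - M) = t by omega] at this
  -- J: least t ≥ M with (t = k-1 ∨ y t < y' t)
  have hexJ : ∃ s, M + s = k - 1 ∨ y (M + s) < y' (M + s) := ⟨k - 1 - M, Or.inl (by omega)⟩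
  set J : ℕ := M + Nat.find hexJ with hJ
  have hJspec : J = k - 1 ∨ y J < y' J := Nat.find_spec hexJ
  have hJle : J ≤ k - 1 := by
    have := Nat.find_min' hexJ (m := k - 1 - M) (Or.inl (by omega))
    omega
  have hJM : M ≤ J := by omega
  have hJmin : ∀ t, M ≤ t → t < J → ¬(t = k - 1 ∨ y t < y' t) := by
    intro t h1 h2
    have := Nat.find_min hexJ (m := t - M) (by omega)
    rwa [show M + (t - M) = t by omega] at this
  -- weak junction conditions
  have hUI : I = 0 ∨ x' (I-1) ≤ x I := by
    rcases Nat.eq_or_lt_of_le hIM with h | h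
    · rcases hMspec with h0 | ⟨h1, h2⟩
      · left; omega
      · right; rw [← h]; exact le_of_lt h1
    · right
      have h3 := hImin (I-1) (by omega) (by omega)
      push_neg at h3
      calc x' (I-1) ≤ x (I-1) := h3.2
        _ ≤ x I := by
            have := hP.sx (I-1) (by omega)
            rw [show I - 1 + 1 = I by omega] at this
            exact le_of_lt this
  have hVJ : J = 0 ∨ y' (J-1) ≤ y J := by
    rcases Nat.eq_or_lt_of_le hJM with h | h
    · rcases hMspec with h0 | ⟨h1, h2⟩
      · left; omega
      · right; rw [← h]; exact le_of_lt h2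
    · right
      have h3 := hJmin (J-1) (by omega) (by omega)
      push_neg at h3
      calc y' (J-1) ≤ y (J-1) := h3.2
        _ ≤ y J := by
            have := hP.sy (J-1) (by omega)
            rw [show J - 1 + 1 = J by omega] at this
            exact le_of_lt this
  rcases le_total I J with hIJ | hJI
  · -- case I ≤ J : zone conditions
    have hZY : ∀ m, I < m → m ≤ J → y' (m-1) < y m := by
      intro m h1 h2
      have h3 := hJmin (m-1) (by omega) (by omega)
      push_neg at h3
      calc y' (m-1) ≤ y (m-1) := h3.2
        _ < y m := by
            have := hP.sy (m-1) (by omega)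
            rwa [show m - 1 + 1 = m by omega] at this
    have hZX : ∀ m, I < m → m ≤ J → x m ≤ x' (m-1) := by
      intro m h1 h2
      have h3 := hMmax m (by omega) (by omega)
      simp only [hP0] at h3
      push_neg at h3
      by_contra hc
      push_neg at hc
      exact absurd (hZY m h1 h2) (not_lt.mpr (h3.2 hc))
    refine ⟨k * I + J, ?_, ?_⟩
    · have h1 : I + 1 ≤ k := by omega
      calc k * I + J < k * I + k := by omega
        _ = k * (I + 1) := by ring
        _ ≤ k * k := Nat.mul_le_mul_left _ h1
    · rw [Nat.mul_add_div (by omega), Nat.div_eq_of_lt (by omega),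
        Nat.mul_add_mod, Nat.mod_eq_of_lt (by omega)]
      rw [add_zero]
      exact helper1 hL hk hP hQ hIle hJle hIJ hIspec hJspec hUI hVJ hZX
        (fun m h1 h2 => le_of_lt (hZY m h1 h2))
  · -- case J ≤ I
    have hZX' : ∀ m, J < m → m ≤ I → x' (m-1) < x m := by
      intro m h1 h2
      have h3 := hImin (m-1) (by omega) (by omega)
      push_neg at h3
      calc x' (m-1) ≤ x (m-1) := h3.2
        _ < x m := by
            have := hP.sx (m-1) (by omega)
            rwa [show m - 1 + 1 = m by omega] at this
    have hZY' : ∀ m, J < m → m ≤ I → y m ≤ y' (m-1) := by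
      intro m h1 h2
      have h3 := hMmax m (by omega) (by omega)
      simp only [hP0] at h3
      push_neg at h3
      exact h3.2 (hZX' m h1 h2)
    refine ⟨k * I + J, ?_, ?_⟩
    · have h1 : I + 1 ≤ k := by omega
      calc k * I + J < k * I + k := by omega
        _ = k * (I + 1) := by ring
        _ ≤ k * k := Nat.mul_le_mul_left _ h1
    · rw [Nat.mul_add_div (by omega), Nat.div_eq_of_lt (by omega),
        Nat.mul_add_mod, Nat.mod_eq_of_lt (by omega)]
      rw [add_zero]
      exact helper2 hL hk hP hQ hIle hJle hJI hIspec hJspec hUI hVJ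
        (fun m h1 h2 => le_of_lt (hZX' m h1 h2)) hZY'

end HVproof4
namespace HVproof5
open HVproof HVproof2
variable {L : Set (ℤ × ℤ)} {A E : ℤ × ℤ}

/-- The exchange lemma: if `(u,v)` is a valid reverse cut of the image of `(i,j)`,
then `(min u i, min v j)` is a valid forward cut. -/
lemma exchange {k i j u v : ℕ} (hk : 1 ≤ k) {x y x' y' : ℕ → ℤ}
    (hi : i ≤ k-1) (hj : j ≤ k-1) (hu : u ≤ k-1) (hv : v ≤ k-1)
    (hP : OK L A E (k+1) x y) (hQ : OK L A E (k-1) x' y')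
    (hfwd : VC L A E k k x y x' y' i j)
    (hrev : VC L A E (k+1) (k-1)
      (glueA x x' i) (glueA y y' j) (glueB x x' i) (glueB y y' j) u v) :
    VC L A E k k x y x' y' (min u i) (min v j) := by
  obtain ⟨hR, hS⟩ := hfwd
  obtain ⟨hPt, hQt⟩ := hrev
  -- strictness of the four glued rows
  have sxR : ∀ m, m + 1 < k → glueA x x' (min u i) m < glueA x x' (min u i) (m+1) := by
    by_cases hui : i ≤ u
    · rw [min_eq_right hui]; exact hR.sx
    · push_neg at hui
      rw [min_eq_left (le_of_lt hui)]
      have hjn : x u < x' u := by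
        have := hPt.sx u (by omega)
        rwa [gA_lo le_rfl, gA_lo (by omega), gA_hi (by omega),
          show u + 1 - 1 = u from rfl, gB_lo hui] at this
      intro m hm
      rcases Nat.lt_or_ge m u with h | h
      · rw [gA_lo (by omega), gA_lo (by omega)]; exact hP.sx m (by omega)
      rcases Nat.eq_or_lt_of_le h with h' | h'
      · rw [gA_lo (by omega), gA_hi (by omega), show m + 1 - 1 = m from rfl]
        exact h' ▸ hjn
      · rw [gA_hi h', gA_hi (by omega), show m + 1 - 1 = m from rfl]
        have := hQ.sx (m-1) (by omega)
        rwa [show m - 1 + 1 = m by omega] at this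
  have syR : ∀ m, m + 1 < k → glueA y y' (min v j) m < glueA y y' (min v j) (m+1) := by
    by_cases hvj : j ≤ v
    · rw [min_eq_right hvj]; exact hR.sy
    · push_neg at hvj
      rw [min_eq_left (le_of_lt hvj)]
      have hjn : y v < y' v := by
        have := hPt.sy v (by omega)
        rwa [gA_lo le_rfl, gA_lo (by omega), gA_hi (by omega),
          show v + 1 - 1 = v from rfl, gB_lo hvj] at this
      intro m hm
      rcases Nat.lt_or_ge m v with h | h
      · rw [gA_lo (by omega), gA_lo (by omega)]; exact hP.sy m (by omega)
      rcases Nat.eq_or_lt_of_le h with h' | h'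
      · rw [gA_lo (by omega), gA_hi (by omega), show m + 1 - 1 = m from rfl]
        exact h' ▸ hjn
      · rw [gA_hi h', gA_hi (by omega), show m + 1 - 1 = m from rfl]
        have := hQ.sy (m-1) (by omega)
        rwa [show m - 1 + 1 = m by omega] at this
  have sxS : ∀ m, m + 1 < k → glueB x x' (min u i) m < glueB x x' (min u i) (m+1) := by
    by_cases hui : i ≤ u
    · rw [min_eq_right hui]; exact hS.sx
    · push_neg at hui
      rw [min_eq_left (le_of_lt hui)]
      intro m hm
      rcases Nat.lt_or_ge (m+1) u with h | h
      · rw [gB_lo (by omega), gB_lo (by omega)]; exact hQ.sx m (by omega)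
      rcases Nat.lt_or_ge m u with h' | h'
      · -- junction: m+1 = u, need x' (u-1) < x (u+1), from hQt at u-1
        have hu1 : 1 ≤ u := by omega
        have hjn : x' (u-1) < x (u+1) := by
          have := hQt.sx (u-1) (by omega)
          rwa [show u - 1 + 1 = u by omega, gB_lo (by omega), gB_lo (by omega),
            gB_hi le_rfl, gA_lo (by omega)] at this
        rw [gB_lo h', gB_hi (by omega)]
        rw [show m = u - 1 by omega, show u - 1 + 1 + 1 = u + 1 by omega]
        exact hjn
      · rw [gB_hi h', gB_hi (by omega)]; exact hP.sx (m+1) (by omega)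
  have syS : ∀ m, m + 1 < k → glueB y y' (min v j) m < glueB y y' (min v j) (m+1) := by
    by_cases hvj : j ≤ v
    · rw [min_eq_right hvj]; exact hS.sy
    · push_neg at hvj
      rw [min_eq_left (le_of_lt hvj)]
      intro m hm
      rcases Nat.lt_or_ge (m+1) v with h | h
      · rw [gB_lo (by omega), gB_lo (by omega)]; exact hQ.sy m (by omega)
      rcases Nat.lt_or_ge m v with h' | h'
      · have hv1 : 1 ≤ v := by omega
        have hjn : y' (v-1) < y (v+1) := by
          have := hQt.sy (v-1) (by omega)
          rwa [show v - 1 + 1 = v by omega, gB_lo (by omega), gB_lo (by omega),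
            gB_hi le_rfl, gA_lo (by omega)] at this
        rw [gB_lo h', gB_hi (by omega)]
        rw [show m = v - 1 by omega, show v - 1 + 1 + 1 = v + 1 by omega]
        exact hjn
      · rw [gB_hi h', gB_hi (by omega)]; exact hP.sy (m+1) (by omega)
  refine ⟨⟨sxR, syR, ?_⟩, ⟨sxS, syS, ?_⟩⟩
  · -- entries of the new R
    intro m hm
    by_cases h1 : m ≤ min u i <;> by_cases h2 : m ≤ min v j
    · rw [gA_lo h1, gA_lo h2]; exact hP.pt m (by omega)
    · -- (x m, y' (m-1))
      rw [gA_lo h1, gA_hi (by omega)]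
      by_cases h3 : j < m
      · have := hR.pt m hm
        rwa [gA_lo (by omega), gA_hi h3] at this
      · have := hPt.pt m (by omega)
        rwa [gA_lo (by omega), gA_lo (by omega), gA_hi (by omega), gB_lo (by omega)]
          at this
    · -- (x' (m-1), y m)
      rw [gA_hi (by omega), gA_lo h2]
      by_cases h3 : i < m
      · have := hR.pt m hm
        rwa [gA_hi h3, gA_lo (by omega)] at this
      · have := hPt.pt m (by omega)
        rwa [gA_hi (by omega), gB_lo (by omega), gA_lo (by omega), gA_lo (by omega)]
          at this
    · rw [gA_hi (by omega), gA_hi (by omega)]; exact hQ.pt (m-1) (by omega)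
  · -- entries of the new S
    intro m hm
    by_cases h1 : m < min u i <;> by_cases h2 : m < min v j
    · rw [gB_lo h1, gB_lo h2]; exact hQ.pt m (by omega)
    · -- (x' m, y (m+1))
      rw [gB_lo h1, gB_hi (by omega)]
      by_cases h3 : j ≤ m
      · have := hS.pt m hm
        rwa [gB_lo (by omega), gB_hi h3] at this
      · have := hQt.pt m (by omega)
        rwa [gB_lo (by omega), gB_lo (by omega), gB_hi (by omega), gA_lo (by omega)]
          at this
    · -- (x (m+1), y' m)
      rw [gB_hi (by omega), gB_lo h2]
      by_cases h3 : i ≤ m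
      · have := hS.pt m hm
        rwa [gB_hi h3, gB_lo (by omega)] at this
      · have := hQt.pt m (by omega)
        rwa [gB_hi (by omega), gA_lo (by omega), gB_lo (by omega), gB_lo (by omega)]
          at this
    · rw [gB_hi (by omega), gB_hi (by omega)]; exact hP.pt (m+1) (by omega)

end HVproof5
namespace HVproof6
open HVproof HVproof2 HVproof4 HVproof5
open scoped Classical
variable {L : Set (ℤ × ℤ)} {A E : ℤ × ℤ}

variable (L A E) in
/-- Abbreviations for the four base sequences of a domain element. -/
def xP {k : ℕ} (d : ↥(TwoRowed L A E (k-1)) × ↥(TwoRowed L A E (k+1))) : ℕ → ℤ :=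
  extZ (k+1) d.2.val.1
variable (L A E) in
def yP {k : ℕ} (d : ↥(TwoRowed L A E (k-1)) × ↥(TwoRowed L A E (k+1))) : ℕ → ℤ :=
  extZ (k+1) d.2.val.2
variable (L A E) in
def xQ {k : ℕ} (d : ↥(TwoRowed L A E (k-1)) × ↥(TwoRowed L A E (k+1))) : ℕ → ℤ :=
  extZ (k-1) d.1.val.1
variable (L A E) in
def yQ {k : ℕ} (d : ↥(TwoRowed L A E (k-1)) × ↥(TwoRowed L A E (k+1))) : ℕ → ℤ :=
  extZ (k-1) d.1.val.2

/-- The canonical (lexicographically least, encoded) valid cut for a pair of arrays. -/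
noncomputable def cutN (hL : IsLadderRegion L) {k : ℕ} (hk : 1 ≤ k)
    (d : ↥(TwoRowed L A E (k-1)) × ↥(TwoRowed L A E (k+1))) : ℕ :=
  Nat.find (exists_cut hL hk (OK_of_mem d.2.2) (OK_of_mem d.1.2))

lemma cutN_lt (hL : IsLadderRegion L) {k : ℕ} (hk : 1 ≤ k)
    (d : ↥(TwoRowed L A E (k-1)) × ↥(TwoRowed L A E (k+1))) :
    cutN hL hk d < k * k :=
  (Nat.find_spec (exists_cut hL hk (OK_of_mem d.2.2) (OK_of_mem d.1.2))).1

lemma cutN_VC (hL : IsLadderRegion L) {k : ℕ} (hk : 1 ≤ k)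
    (d : ↥(TwoRowed L A E (k-1)) × ↥(TwoRowed L A E (k+1))) :
    VC L A E k k (xP L A E d) (yP L A E d) (xQ L A E d) (yQ L A E d)
      (cutN hL hk d / k) (cutN hL hk d % k) :=
  (Nat.find_spec (exists_cut hL hk (OK_of_mem d.2.2) (OK_of_mem d.1.2))).2

lemma cutN_min' (hL : IsLadderRegion L) {k : ℕ} (hk : 1 ≤ k)
    (d : ↥(TwoRowed L A E (k-1)) × ↥(TwoRowed L A E (k+1))) {n : ℕ}
    (hn : n < k * k)
    (hvc : VC L A E k k (xP L A E d) (yP L A E d) (xQ L A E d) (yQ L A E d)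
      (n / k) (n % k)) :
    cutN hL hk d ≤ n :=
  Nat.find_min' _ ⟨hn, hvc⟩

/-- The injection `T_{k-1} × T_{k+1} → T_k × T_k`. -/
noncomputable def Fmap (hL : IsLadderRegion L) {k : ℕ} (hk : 1 ≤ k)
    (d : ↥(TwoRowed L A E (k-1)) × ↥(TwoRowed L A E (k+1))) :
    ↥(TwoRowed L A E k) × ↥(TwoRowed L A E k) :=
  (⟨_, mem_of_OK (cutN_VC hL hk d).1⟩, ⟨_, mem_of_OK (cutN_VC hL hk d).2⟩)

lemma cut_le (hL : IsLadderRegion L) {k : ℕ} (hk : 1 ≤ k)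
    (d d' : ↥(TwoRowed L A E (k-1)) × ↥(TwoRowed L A E (k+1)))
    (heq : Fmap hL hk d = Fmap hL hk d') : cutN hL hk d' ≤ cutN hL hk d := by
  have hik : cutN hL hk d / k ≤ k - 1 := by
    have h2 : cutN hL hk d / k < k :=
      (Nat.div_lt_iff_lt_mul (by omega)).2 (cutN_lt hL hk d)
    omega
  have hjk : cutN hL hk d % k ≤ k - 1 := by
    have := Nat.mod_lt (cutN hL hk d) (y := k) (by omega); omega
  have hIk : cutN hL hk d' / k ≤ k - 1 := by
    have h2 : cutN hL hk d' / k < k :=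
      (Nat.div_lt_iff_lt_mul (by omega)).2 (cutN_lt hL hk d')
    omega
  have hJk : cutN hL hk d' % k ≤ k - 1 := by
    have := Nat.mod_lt (cutN hL hk d') (y := k) (by omega); omega
  -- pointwise equalities of the images
  have hE1 : ∀ t, t < k → glueA (xP L A E d) (xQ L A E d) (cutN hL hk d / k) t
      = glueA (xP L A E d') (xQ L A E d') (cutN hL hk d' / k) t :=
    fun t ht => congrFun (congrArg (fun z => z.1.val.1) heq) ⟨t, ht⟩
  have hE2 : ∀ t, t < k → glueA (yP L A E d) (yQ L A E d) (cutN hL hk d % k) t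
      = glueA (yP L A E d') (yQ L A E d') (cutN hL hk d' % k) t :=
    fun t ht => congrFun (congrArg (fun z => z.1.val.2) heq) ⟨t, ht⟩
  have hE3 : ∀ t, t < k → glueB (xP L A E d) (xQ L A E d) (cutN hL hk d / k) t
      = glueB (xP L A E d') (xQ L A E d') (cutN hL hk d' / k) t :=
    fun t ht => congrFun (congrArg (fun z => z.2.val.1) heq) ⟨t, ht⟩
  have hE4 : ∀ t, t < k → glueB (yP L A E d) (yQ L A E d) (cutN hL hk d % k) t
      = glueB (yP L A E d') (yQ L A E d') (cutN hL hk d' % k) t :=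
    fun t ht => congrFun (congrArg (fun z => z.2.val.2) heq) ⟨t, ht⟩
  have hP : OK L A E (k+1) (xP L A E d) (yP L A E d) := OK_of_mem d.2.2
  have hQ : OK L A E (k-1) (xQ L A E d) (yQ L A E d) := OK_of_mem d.1.2
  have hP' : OK L A E (k+1) (xP L A E d') (yP L A E d') := OK_of_mem d'.2.2
  have hQ' : OK L A E (k-1) (xQ L A E d') (yQ L A E d') := OK_of_mem d'.1.2
  -- the reverse cut (i,j) is valid for the image of d' (the unspliced arrays are those of d)
  have hrev : VC L A E (k+1) (k-1)
      (glueA (xP L A E d') (xQ L A E d') (cutN hL hk d' / k))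
      (glueA (yP L A E d') (yQ L A E d') (cutN hL hk d' % k))
      (glueB (xP L A E d') (xQ L A E d') (cutN hL hk d' / k))
      (glueB (yP L A E d') (yQ L A E d') (cutN hL hk d' % k))
      (cutN hL hk d / k) (cutN hL hk d % k) := by
    constructor
    · refine OK_congr (fun m hm => ?_) (fun m hm => ?_) hP
      · calc xP L A E d m
            = glueA (glueA (xP L A E d) (xQ L A E d) (cutN hL hk d / k))
              (glueB (xP L A E d) (xQ L A E d) (cutN hL hk d / k)) (cutN hL hk d / k) m :=
            (glueA_inv _ _ _ m).symm
          _ = _ := glueA_congr hik hk hE1 hE3 m hm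
      · calc yP L A E d m
            = glueA (glueA (yP L A E d) (yQ L A E d) (cutN hL hk d % k))
              (glueB (yP L A E d) (yQ L A E d) (cutN hL hk d % k)) (cutN hL hk d % k) m :=
            (glueA_inv _ _ _ m).symm
          _ = _ := glueA_congr hjk hk hE2 hE4 m hm
    · refine OK_congr (fun m hm => ?_) (fun m hm => ?_) hQ
      · calc xQ L A E d m
            = glueB (glueA (xP L A E d) (xQ L A E d) (cutN hL hk d / k))
              (glueB (xP L A E d) (xQ L A E d) (cutN hL hk d / k)) (cutN hL hk d / k) m :=
            (glueB_inv _ _ _ m).symm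
          _ = _ := glueB_congr hik hk hE1 hE3 m hm
      · calc yQ L A E d m
            = glueB (glueA (yP L A E d) (yQ L A E d) (cutN hL hk d % k))
              (glueB (yP L A E d) (yQ L A E d) (cutN hL hk d % k)) (cutN hL hk d % k) m :=
            (glueB_inv _ _ _ m).symm
          _ = _ := glueB_congr hjk hk hE2 hE4 m hm
  have hmin := exchange hk hIk hJk hik hjk hP' hQ' (cutN_VC hL hk d') hrev
  -- minimality at the combined cut
  set i0 : ℕ := min (cutN hL hk d / k) (cutN hL hk d' / k) with hi0
  set j0 : ℕ := min (cutN hL hk d % k) (cutN hL hk d' % k) with hj0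
  have hn0 : k * i0 + j0 < k * k := by
    have h1 : i0 + 1 ≤ k := by omega
    calc k * i0 + j0 < k * i0 + k := by omega
      _ = k * (i0 + 1) := by ring
      _ ≤ k * k := Nat.mul_le_mul_left _ h1
  have hle : cutN hL hk d' ≤ k * i0 + j0 := by
    apply cutN_min' hL hk d' hn0
    rw [Nat.mul_add_div (by omega), Nat.div_eq_of_lt (by omega),
      Nat.mul_add_mod, Nat.mod_eq_of_lt (by omega), add_zero]
    exact hmin
  have h5 : k * i0 ≤ k * (cutN hL hk d / k) :=
    Nat.mul_le_mul_left _ (by rw [hi0]; exact min_le_left _ _)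
  have h6 : j0 ≤ cutN hL hk d % k := by rw [hj0]; exact min_le_left _ _
  calc cutN hL hk d' ≤ k * i0 + j0 := hle
    _ ≤ k * (cutN hL hk d / k) + (cutN hL hk d % k) := by omega
    _ = cutN hL hk d := Nat.div_add_mod _ _

lemma Fmap_inj (hL : IsLadderRegion L) {k : ℕ} (hk : 1 ≤ k) :
    Function.Injective (Fmap (A := A) (E := E) hL (k := k) hk) := by
  intro d d' heq
  have hcut : cutN hL hk d = cutN hL hk d' :=
    le_antisymm (cut_le hL hk d' d heq.symm) (cut_le hL hk d d' heq)
  have hik : cutN hL hk d / k ≤ k - 1 := by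
    have h2 : cutN hL hk d / k < k :=
      (Nat.div_lt_iff_lt_mul (by omega)).2 (cutN_lt hL hk d)
    omega
  have hjk : cutN hL hk d % k ≤ k - 1 := by
    have := Nat.mod_lt (cutN hL hk d) (y := k) (by omega); omega
  have hE1 : ∀ t, t < k → glueA (xP L A E d) (xQ L A E d) (cutN hL hk d / k) t
      = glueA (xP L A E d') (xQ L A E d') (cutN hL hk d / k) t := by
    intro t ht
    have h : _ = glueA (xP L A E d') (xQ L A E d') (cutN hL hk d' / k) t := congrFun (congrArg (fun z => z.1.val.1) heq) (⟨t, ht⟩ : Fin k)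
    rw [← hcut] at h
    exact h
  have hE2 : ∀ t, t < k → glueA (yP L A E d) (yQ L A E d) (cutN hL hk d % k) t
      = glueA (yP L A E d') (yQ L A E d') (cutN hL hk d % k) t := by
    intro t ht
    have h : _ = glueA (yP L A E d') (yQ L A E d') (cutN hL hk d' % k) t := congrFun (congrArg (fun z => z.1.val.2) heq) (⟨t, ht⟩ : Fin k)
    rw [← hcut] at h
    exact h
  have hE3 : ∀ t, t < k → glueB (xP L A E d) (xQ L A E d) (cutN hL hk d / k) t
      = glueB (xP L A E d') (xQ L A E d') (cutN hL hk d / k) t := by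
    intro t ht
    have h : _ = glueB (xP L A E d') (xQ L A E d') (cutN hL hk d' / k) t := congrFun (congrArg (fun z => z.2.val.1) heq) (⟨t, ht⟩ : Fin k)
    rw [← hcut] at h
    exact h
  have hE4 : ∀ t, t < k → glueB (yP L A E d) (yQ L A E d) (cutN hL hk d % k) t
      = glueB (yP L A E d') (yQ L A E d') (cutN hL hk d % k) t := by
    intro t ht
    have h : _ = glueB (yP L A E d') (yQ L A E d') (cutN hL hk d' % k) t := congrFun (congrArg (fun z => z.2.val.2) heq) (⟨t, ht⟩ : Fin k)
    rw [← hcut] at h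
    exact h
  -- recover the four base sequences
  have hxP : ∀ m, m < k + 1 → xP L A E d m = xP L A E d' m := by
    intro m hm
    calc xP L A E d m = glueA (glueA (xP L A E d) (xQ L A E d) (cutN hL hk d / k))
          (glueB (xP L A E d) (xQ L A E d) (cutN hL hk d / k)) (cutN hL hk d / k) m :=
        (glueA_inv _ _ _ m).symm
      _ = glueA (glueA (xP L A E d') (xQ L A E d') (cutN hL hk d / k))
          (glueB (xP L A E d') (xQ L A E d') (cutN hL hk d / k)) (cutN hL hk d / k) m :=
        glueA_congr hik hk hE1 hE3 m hm
      _ = xP L A E d' m := glueA_inv _ _ _ m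
  have hyP : ∀ m, m < k + 1 → yP L A E d m = yP L A E d' m := by
    intro m hm
    calc yP L A E d m = glueA (glueA (yP L A E d) (yQ L A E d) (cutN hL hk d % k))
          (glueB (yP L A E d) (yQ L A E d) (cutN hL hk d % k)) (cutN hL hk d % k) m :=
        (glueA_inv _ _ _ m).symm
      _ = glueA (glueA (yP L A E d') (yQ L A E d') (cutN hL hk d % k))
          (glueB (yP L A E d') (yQ L A E d') (cutN hL hk d % k)) (cutN hL hk d % k) m :=
        glueA_congr hjk hk hE2 hE4 m hm
      _ = yP L A E d' m := glueA_inv _ _ _ m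
  have hxQ : ∀ m, m < k - 1 → xQ L A E d m = xQ L A E d' m := by
    intro m hm
    calc xQ L A E d m = glueB (glueA (xP L A E d) (xQ L A E d) (cutN hL hk d / k))
          (glueB (xP L A E d) (xQ L A E d) (cutN hL hk d / k)) (cutN hL hk d / k) m :=
        (glueB_inv _ _ _ m).symm
      _ = glueB (glueA (xP L A E d') (xQ L A E d') (cutN hL hk d / k))
          (glueB (xP L A E d') (xQ L A E d') (cutN hL hk d / k)) (cutN hL hk d / k) m :=
        glueB_congr hik hk hE1 hE3 m hm
      _ = xQ L A E d' m := glueB_inv _ _ _ m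
  have hyQ : ∀ m, m < k - 1 → yQ L A E d m = yQ L A E d' m := by
    intro m hm
    calc yQ L A E d m = glueB (glueA (yP L A E d) (yQ L A E d) (cutN hL hk d % k))
          (glueB (yP L A E d) (yQ L A E d) (cutN hL hk d % k)) (cutN hL hk d % k) m :=
        (glueB_inv _ _ _ m).symm
      _ = glueB (glueA (yP L A E d') (yQ L A E d') (cutN hL hk d % k))
          (glueB (yP L A E d') (yQ L A E d') (cutN hL hk d % k)) (cutN hL hk d % k) m :=
        glueB_congr hjk hk hE2 hE4 m hm
      _ = yQ L A E d' m := glueB_inv _ _ _ m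
  -- conclude
  have e2 : d.2 = d'.2 := by
    apply Subtype.ext
    apply Prod.ext
    · funext m
      have := hxP m.val m.isLt
      rwa [show xP L A E d m.val = d.2.val.1 m from extZ_eq _ m,
        show xP L A E d' m.val = d'.2.val.1 m from extZ_eq _ m] at this
    · funext m
      have := hyP m.val m.isLt
      rwa [show yP L A E d m.val = d.2.val.2 m from extZ_eq _ m,
        show yP L A E d' m.val = d'.2.val.2 m from extZ_eq _ m] at this
  have e1 : d.1 = d'.1 := by
    apply Subtype.ext
    apply Prod.ext
    · funext m
      have := hxQ m.val m.isLt
      rwa [show xQ L A E d m.val = d.1.val.1 m from extZ_eq _ m,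
        show xQ L A E d' m.val = d'.1.val.1 m from extZ_eq _ m] at this
    · funext m
      have := hyQ m.val m.isLt
      rwa [show yQ L A E d m.val = d.1.val.2 m from extZ_eq _ m,
        show yQ L A E d' m.val = d'.1.val.2 m from extZ_eq _ m] at this
  exact Prod.ext e1 e2

end HVproof6
namespace HVproof7
open HVproof HVproof2 HVproof6

theorem general_logConcave (L : Set (ℤ × ℤ)) (hL : IsLadderRegion L) (A E : ℤ × ℤ)
    (k : ℕ) (hk : 1 ≤ k) :
    Nat.card ↥(TwoRowed L A E (k - 1)) * Nat.card ↥(TwoRowed L A E (k + 1)) ≤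
      Nat.card ↥(TwoRowed L A E k) ^ 2 := by
  haveI h1 : Finite ↥(TwoRowed L A E (k-1)) := (twoRowed_finite (k-1)).to_subtype
  haveI h2 : Finite ↥(TwoRowed L A E (k+1)) := (twoRowed_finite (k+1)).to_subtype
  haveI h3 : Finite ↥(TwoRowed L A E k) := (twoRowed_finite k).to_subtype
  have hcard := Nat.card_le_card_of_injective _ (Fmap_inj (A := A) (E := E) hL hk)
  rw [Nat.card_prod, Nat.card_prod] at hcard
  rw [sq]
  exact hcard

end HVproof7

/-- For a ladder region `L` with `A = (0, u₁ - 1)` and `E = (a - v₁ + 1, b)`,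
the sequence `h_k = |T^L_k(A → E)|` is log-concave: `h_{k-1} h_{k+1} ≤ h_k²`. -/
theorem hvector_logConcave (L : Set (ℤ × ℤ)) (hL : IsLadderRegion L)
    (a b u₁ v₁ : ℤ) (k : ℕ) (hk : 1 ≤ k) :
    Nat.card ↥(TwoRowed L (0, u₁ - 1) (a - v₁ + 1, b) (k - 1)) *
      Nat.card ↥(TwoRowed L (0, u₁ - 1) (a - v₁ + 1, b) (k + 1)) ≤
    Nat.card ↥(TwoRowed L (0, u₁ - 1) (a - v₁ + 1, b) k) ^ 2 :=
  HVproof7.general_logConcave L hL (0, u₁ - 1) (a - v₁ + 1, b) k hk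
end
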